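/- arXiv:2601.06890 — 7 statements merged into one kernel-verified Lean document; each statement's English description precedes it below -/
import Mathlib

section
/- Let X follow the two-parameter Weibull distribution with shape α₀ > 0 and scale λ > 0, and define h(α) = E[X^{α} log X] / E[X^{α}] for α > 0. Then h is differentiable on (0,∞) with h'(α) = ( E[X^{α}(log X)²] · E[X^{α}] − (E[X^{α} log X])² ) / (E[X^{α}])², and h'(α) > 0 for all α > 0; consequently h is strictly increasing on (0,∞). -/
open MeasureTheory Real

/-- The density of the two-parameter Weibull distribution with shape `a > 0` and
scale `l > 0`: `f(x) = (a/l) (x/l)^(a-1) exp(-(x/l)^a)` for `x > 0`. -/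
noncomputable def weibullPDF (a l x : ℝ) : ℝ :=
  (a / l) * (x / l) ^ (a - 1) * Real.exp (-(x / l) ^ a)

section Aux

open Set Filter Asymptotics Topology

lemma hasDerivAt_rpow_base {t : ℝ} (ht : 0 < t) (s : ℝ) :
    HasDerivAt (fun z : ℝ => t ^ z) (t ^ s * Real.log t) s := by
  have h : HasDerivAt (fun z : ℝ => Real.exp (Real.log t * z))
      (Real.exp (Real.log t * s) * Real.log t) s := by
    simpa [mul_comm] using ((hasDerivAt_id s).const_mul (Real.log t)).exp
  refine (h.congr_deriv ?_).congr_of_eventuallyEq ?_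
  · rw [rpow_def_of_pos ht]
  · filter_upwards with z using (rpow_def_of_pos ht z)

lemma real_mellin_deriv {g : ℝ → ℝ} {b : ℝ}
    (hg : ContinuousOn g (Set.Ioi 0))
    (htop : ∀ a : ℝ, g =O[atTop] fun x : ℝ => x ^ (-a))
    (hbot : g =O[𝓝[>] (0:ℝ)] fun x : ℝ => x ^ (-b)) {s : ℝ} (hs : b < s) :
    IntegrableOn (fun t => t ^ (s - 1) * g t) (Set.Ioi 0) ∧
      IntegrableOn (fun t => t ^ (s - 1) * (Real.log t * g t)) (Set.Ioi 0) ∧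
      HasDerivAt (fun z : ℝ => ∫ t in Set.Ioi (0:ℝ), t ^ (z - 1) * g t)
        (∫ t in Set.Ioi (0:ℝ), t ^ (s - 1) * (Real.log t * g t)) s := by
  have hfc : LocallyIntegrableOn g (Set.Ioi 0) :=
    hg.locallyIntegrableOn measurableSet_Ioi
  have hrpowC : ∀ z : ℝ, ContinuousOn (fun t : ℝ => t ^ (z - 1)) (Set.Ioi 0) := fun z =>
    fun t ht => (Real.continuousAt_rpow_const t _ (Or.inl (ne_of_gt ht))).continuousWithinAt
  have hlogC' : ContinuousOn Real.log (Set.Ioi 0) :=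
    continuousOn_log.mono (fun x hx => ne_of_gt hx)
  set v : ℝ := (s - b) / 2 with hv
  have hv0 : 0 < v := by simp [hv]; linarith
  have hv1 : v < s - b := by simp [hv]; linarith
  have habs : ∀ a : ℝ, (fun t : ℝ => |Real.log t| * |g t|) =O[atTop] fun x : ℝ => x ^ (-a) := by
    intro a
    refine ((isBigO_rpow_top_log_smul (lt_add_one a) (htop (a+1))).norm_left).congr_left
      fun t => ?_
    simp [norm_smul, abs_mul]
  have habs_bot : ∀ b' : ℝ, b < b' →
      (fun t : ℝ => |Real.log t| * |g t|) =O[𝓝[>] (0:ℝ)] fun x : ℝ => x ^ (-b') := by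
    intro b' hb'
    refine ((isBigO_rpow_zero_log_smul hb' hbot).norm_left).congr_left fun t => ?_
    simp [norm_smul, abs_mul]
  have hlocabs : LocallyIntegrableOn (fun t : ℝ => |Real.log t| * |g t|) (Set.Ioi 0) :=
    ((hlogC'.abs).mul (hg.abs)).locallyIntegrableOn measurableSet_Ioi
  have key : ∀ j : ℝ, b < j →
      IntegrableOn (fun t : ℝ => t ^ (j - 1) * (|Real.log t| * |g t|)) (Set.Ioi 0) := by
    intro j hj
    have hb' : b < (b + j) / 2 := by linarith
    have hj' : (b + j) / 2 < j := by linarith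
    exact mellin_convergent_of_isBigO_scalar hlocabs (habs (j+1)) (lt_add_one j)
      (habs_bot _ hb') hj'
  set F : ℝ → ℝ → ℝ := fun z t => t ^ (z - 1) * g t with hF
  set F' : ℝ → ℝ → ℝ := fun z t => t ^ (z - 1) * (Real.log t * g t) with hF'
  set bound : ℝ → ℝ := fun t => (t ^ (s + v - 1) + t ^ (s - v - 1)) * (|Real.log t| * |g t|)
    with hbound
  have h1 : ∀ᶠ z : ℝ in 𝓝 s, AEStronglyMeasurable (F z) (volume.restrict <| Set.Ioi 0) := by
    refine Eventually.of_forall fun z => ?_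
    exact ((hrpowC z).mul hg).aestronglyMeasurable measurableSet_Ioi
  have h2 : IntegrableOn (F s) (Set.Ioi 0) :=
    mellin_convergent_of_isBigO_scalar hfc (htop (s+1)) (lt_add_one s) hbot hs
  have h3 : AEStronglyMeasurable (F' s) (volume.restrict <| Set.Ioi 0) :=
    ((hrpowC s).mul (hlogC'.mul hg)).aestronglyMeasurable measurableSet_Ioi
  have h4 : ∀ᵐ t : ℝ ∂volume.restrict (Set.Ioi 0),
      ∀ z : ℝ, z ∈ Metric.ball s v → ‖F' z t‖ ≤ bound t := by
    refine (ae_restrict_mem measurableSet_Ioi).mono fun t ht z hz => ?_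
    have ht' : (0:ℝ) < t := ht
    rw [Metric.mem_ball, Real.dist_eq] at hz
    have hz1 : z - 1 ≤ s + v - 1 := by
      have := abs_lt.mp hz; linarith [this.2]
    have hz2 : s - v - 1 ≤ z - 1 := by
      have := abs_lt.mp hz; linarith [this.1]
    have hpow : t ^ (z - 1) ≤ t ^ (s + v - 1) + t ^ (s - v - 1) := by
      rcases le_or_gt 1 t with h | h
      · exact le_add_of_le_of_nonneg (rpow_le_rpow_of_exponent_le h hz1)
          (rpow_nonneg ht'.le _)
      · exact le_add_of_nonneg_of_le (rpow_nonneg ht'.le _)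
          (rpow_le_rpow_of_exponent_ge ht' h.le hz2)
    have : ‖F' z t‖ = t ^ (z - 1) * (|Real.log t| * |g t|) := by
      simp [hF', abs_mul, abs_of_nonneg (rpow_nonneg ht'.le _)]
    rw [this, hbound]
    have hnn : 0 ≤ |Real.log t| * |g t| := by positivity
    exact mul_le_mul_of_nonneg_right hpow hnn
  have h5 : Integrable bound (volume.restrict (Set.Ioi 0)) := by
    have e1 := key (s + v) (by linarith)
    have e2 := key (s - v) (by linarith)
    have h12 : IntegrableOn
        (fun t : ℝ => t ^ (s + v - 1) * (|Real.log t| * |g t|)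
          + t ^ (s - v - 1) * (|Real.log t| * |g t|)) (Set.Ioi 0) := e1.add e2
    refine h12.congr_fun (fun t ht => ?_) measurableSet_Ioi
    simp only [hbound]
    ring
  have h6 : ∀ᵐ t : ℝ ∂volume.restrict (Set.Ioi 0),
      ∀ z : ℝ, z ∈ Metric.ball s v → HasDerivAt (fun w => F w t) (F' z t) z := by
    refine (ae_restrict_mem measurableSet_Ioi).mono fun t ht z _ => ?_
    have ht' : (0:ℝ) < t := ht
    have d1 : HasDerivAt (fun w : ℝ => t ^ (w - 1)) (t ^ (z - 1) * Real.log t) z := by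
      have := (hasDerivAt_rpow_base ht' (z - 1)).comp z ((hasDerivAt_id z).sub_const 1)
      simpa [Function.comp_def] using this
    have := d1.mul_const (g t)
    simpa [hF, hF', mul_assoc] using this
  have main := hasDerivAt_integral_of_dominated_loc_of_deriv_le (Metric.ball_mem_nhds s hv0) h1 h2 h3 h4 h5 h6
  exact ⟨h2, main.1, main.2⟩

lemma weibull_pos {α₀ lam : ℝ} (hα₀ : 0 < α₀) (hlam : 0 < lam) :
    ∀ x ∈ Set.Ioi (0:ℝ), 0 < weibullPDF α₀ lam x := by
  intro x hx
  have hx' : (0:ℝ) < x / lam := div_pos hx hlam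
  exact mul_pos (mul_pos (div_pos hα₀ hlam) (rpow_pos_of_pos hx' _)) (exp_pos _)

lemma weibull_contOn {α₀ lam : ℝ} (hlam : 0 < lam) :
    ContinuousOn (weibullPDF α₀ lam) (Set.Ioi 0) := by
  have h1 : ContinuousOn (fun x : ℝ => x / lam) (Set.Ioi 0) :=
    (continuous_id.div_const lam).continuousOn
  have h2 : ContinuousOn (fun x : ℝ => (x / lam) ^ (α₀ - 1)) (Set.Ioi 0) :=
    h1.rpow_const (fun x hx => Or.inl (ne_of_gt (div_pos hx hlam)))
  have h3 : ContinuousOn (fun x : ℝ => Real.exp (-(x / lam) ^ α₀)) (Set.Ioi 0) :=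
    ((h1.rpow_const (fun x hx => Or.inl (ne_of_gt (div_pos hx hlam)))).neg).rexp
  exact ((continuousOn_const.mul h2).mul h3)

lemma weibull_g_eq {α₀ lam : ℝ} (hlam : 0 < lam) : ∀ x ∈ Set.Ioi (0:ℝ),
    x * weibullPDF α₀ lam x = (α₀ / lam ^ α₀) * (x ^ α₀ * Real.exp (-(x / lam) ^ α₀)) := by
  intro x hx
  have hx' : (0:ℝ) < x := hx
  have hl0 : lam ≠ 0 := hlam.ne'
  have hx0 : x ≠ 0 := hx'.ne'
  have hc : lam ^ α₀ ≠ 0 := (rpow_pos_of_pos hlam _).ne'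
  unfold weibullPDF
  rw [div_rpow hx'.le hlam.le,
    show x ^ (α₀ - 1) = x ^ α₀ / x by rw [rpow_sub hx', rpow_one],
    show lam ^ (α₀ - 1) = lam ^ α₀ / lam by rw [rpow_sub hlam, rpow_one]]
  field_simp

lemma weibull_exp_tendsto {α₀ lam : ℝ} (hα₀ : 0 < α₀) (hlam : 0 < lam) (q : ℝ) :
    Tendsto (fun x : ℝ => x ^ q * Real.exp (-(x / lam) ^ α₀)) atTop (𝓝 0) := by
  have hc : (0:ℝ) < lam ^ α₀ := rpow_pos_of_pos hlam _
  have main := (tendsto_rpow_mul_exp_neg_mul_atTop_nhds_zero (q / α₀) ((lam ^ α₀)⁻¹)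
    (by positivity)).comp (tendsto_rpow_atTop hα₀)
  refine main.congr' ?_
  filter_upwards [eventually_gt_atTop (0:ℝ)] with x hx
  have h1 : (x ^ α₀) ^ (q / α₀) = x ^ q := by
    rw [← rpow_mul hx.le, mul_div_cancel₀ _ hα₀.ne']
  have h2 : (x / lam) ^ α₀ = (lam ^ α₀)⁻¹ * x ^ α₀ := by
    rw [div_rpow hx.le hlam.le, div_eq_inv_mul]
  simp only [Function.comp_apply, h1, h2, neg_mul]

lemma weibull_g_top {α₀ lam : ℝ} (hα₀ : 0 < α₀) (hlam : 0 < lam) (a : ℝ) :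
    (fun x : ℝ => x * weibullPDF α₀ lam x) =O[atTop] fun x : ℝ => x ^ (-a) := by
  have T : Tendsto (fun x : ℝ => x ^ a * (x * weibullPDF α₀ lam x)) atTop (𝓝 0) := by
    have := ((weibull_exp_tendsto hα₀ hlam (a + α₀)).const_mul (α₀ / lam ^ α₀))
    rw [mul_zero] at this
    refine this.congr' ?_
    filter_upwards [eventually_gt_atTop (0:ℝ)] with x hx
    rw [weibull_g_eq hlam x hx, rpow_add hx]
    ring
  have h := (isBigO_refl (fun x : ℝ => x ^ (-a)) atTop).mul (T.isBigO_one ℝ)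
  refine h.congr' ?_ ?_
  · filter_upwards [eventually_gt_atTop (0:ℝ)] with x hx
    rw [← mul_assoc, ← rpow_add hx, neg_add_cancel, rpow_zero, one_mul]
  · filter_upwards with x
    rw [mul_one]

lemma weibull_g_bot {α₀ lam : ℝ} (hα₀ : 0 < α₀) (hlam : 0 < lam) :
    (fun x : ℝ => x * weibullPDF α₀ lam x) =O[𝓝[>] (0:ℝ)] fun x : ℝ => x ^ (-(0:ℝ)) := by
  rw [Asymptotics.isBigO_iff]
  refine ⟨α₀ / lam ^ α₀, ?_⟩
  filter_upwards [Ioo_mem_nhdsGT_of_mem (show (0:ℝ) ∈ Set.Ico 0 1 by norm_num)] with x hx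
  have hx0 : (0:ℝ) < x := hx.1
  have hc : (0:ℝ) < α₀ / lam ^ α₀ := div_pos hα₀ (rpow_pos_of_pos hlam _)
  rw [weibull_g_eq hlam x hx0, neg_zero, rpow_zero, norm_one, mul_one, Real.norm_eq_abs,
    abs_of_nonneg (by positivity)]
  have h1 : x ^ α₀ ≤ 1 := by
    calc x ^ α₀ ≤ 1 ^ α₀ := rpow_le_rpow hx0.le hx.2.le hα₀.le
    _ = 1 := one_rpow _
  have h2 : Real.exp (-(x / lam) ^ α₀) ≤ 1 := by
    rw [exp_le_one_iff]
    simp [rpow_nonneg (div_pos hx0 hlam).le]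
  calc α₀ / lam ^ α₀ * (x ^ α₀ * Real.exp (-(x / lam) ^ α₀)) ≤ α₀ / lam ^ α₀ * (1 * 1) := by
        apply mul_le_mul_of_nonneg_left _ hc.le
        exact mul_le_mul h1 h2 (exp_pos _).le one_pos.le
    _ = α₀ / lam ^ α₀ := by ring

end Aux

section Main

open Set Filter Asymptotics Topology

/-- For `X ~ Weibull(α₀, λ)`, the function `h(α) = E[X^α log X] / E[X^α]` is
differentiable on `(0,∞)` with
`h'(α) = (E[X^α (log X)²] E[X^α] - (E[X^α log X])²) / (E[X^α])²`, this derivative is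
strictly positive, and consequently `h` is strictly increasing on `(0,∞)`. -/
theorem weibull_ratio_functional_strictly_increasing
    (α₀ lam : ℝ) (hα₀ : 0 < α₀) (hlam : 0 < lam)
    (h : ℝ → ℝ)
    (hh : ∀ α, 0 < α → h α =
      (∫ x in Set.Ioi (0 : ℝ), x ^ α * Real.log x * weibullPDF α₀ lam x)
        / (∫ x in Set.Ioi (0 : ℝ), x ^ α * weibullPDF α₀ lam x)) :
    (∀ α : ℝ, 0 < α →
      HasDerivAt h
        (((∫ x in Set.Ioi (0 : ℝ), x ^ α * (Real.log x) ^ 2 * weibullPDF α₀ lam x)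
            * (∫ x in Set.Ioi (0 : ℝ), x ^ α * weibullPDF α₀ lam x)
          - (∫ x in Set.Ioi (0 : ℝ), x ^ α * Real.log x * weibullPDF α₀ lam x) ^ 2)
          / (∫ x in Set.Ioi (0 : ℝ), x ^ α * weibullPDF α₀ lam x) ^ 2) α
      ∧ 0 <
        ((∫ x in Set.Ioi (0 : ℝ), x ^ α * (Real.log x) ^ 2 * weibullPDF α₀ lam x)
            * (∫ x in Set.Ioi (0 : ℝ), x ^ α * weibullPDF α₀ lam x)
          - (∫ x in Set.Ioi (0 : ℝ), x ^ α * Real.log x * weibullPDF α₀ lam x) ^ 2)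
          / (∫ x in Set.Ioi (0 : ℝ), x ^ α * weibullPDF α₀ lam x) ^ 2)
    ∧ StrictMonoOn h (Set.Ioi (0 : ℝ)) := by
  --
  set w : ℝ → ℝ := weibullPDF α₀ lam with hw
  set g : ℝ → ℝ := fun x => x * w x with hg
  set g1 : ℝ → ℝ := fun x => Real.log x * g x with hg1
  have gc : ContinuousOn g (Set.Ioi 0) :=
    continuousOn_id.mul (weibull_contOn hlam)
  have g1c : ContinuousOn g1 (Set.Ioi 0) :=
    (continuousOn_log.mono (fun x hx => ne_of_gt hx)).mul gc
  have gtop : ∀ a : ℝ, g =O[atTop] fun x : ℝ => x ^ (-a) := weibull_g_top hα₀ hlam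
  have gbot : g =O[𝓝[>] (0:ℝ)] fun x : ℝ => x ^ (-(0:ℝ)) := weibull_g_bot hα₀ hlam
  have g1top : ∀ a : ℝ, g1 =O[atTop] fun x : ℝ => x ^ (-a) := by
    intro a
    refine (isBigO_rpow_top_log_smul (lt_add_one a) (gtop (a+1))).congr_left fun t => ?_
    simp [hg1, smul_eq_mul]
  set P0 : ℝ → ℝ := fun z => ∫ t in Set.Ioi (0:ℝ), t ^ (z - 1) * g t with hP0
  set P1 : ℝ → ℝ := fun z => ∫ t in Set.Ioi (0:ℝ), t ^ (z - 1) * g1 t with hP1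
  -- pointwise identities for integrands
  have e0 : ∀ z : ℝ, ∀ x ∈ Set.Ioi (0:ℝ), x ^ z * w x = x ^ (z - 1) * g x := by
    intro z x hx
    have hx' : (0:ℝ) < x := hx
    rw [hg, show x ^ (z - 1) = x ^ z / x by rw [rpow_sub hx', rpow_one]]
    field_simp
  have e1 : ∀ z : ℝ, ∀ x ∈ Set.Ioi (0:ℝ),
      x ^ z * Real.log x * w x = x ^ (z - 1) * g1 x := by
    intro z x hx
    rw [hg1, show x ^ (z - 1) * (Real.log x * g x) = Real.log x * (x ^ (z - 1) * g x) by ring,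
      ← e0 z x hx]
    ring
  have e2 : ∀ z : ℝ, ∀ x ∈ Set.Ioi (0:ℝ),
      x ^ z * (Real.log x) ^ 2 * w x = x ^ (z - 1) * (Real.log x * g1 x) := by
    intro z x hx
    rw [hg1, show x ^ (z - 1) * (Real.log x * (Real.log x * g x))
        = (Real.log x) ^ 2 * (x ^ (z - 1) * g x) by ring, ← e0 z x hx]
    ring
  have E0 : ∀ z : ℝ, (∫ x in Set.Ioi (0:ℝ), x ^ z * w x) = P0 z := fun z =>
    setIntegral_congr_fun measurableSet_Ioi (fun x hx => e0 z x hx)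
  have E1 : ∀ z : ℝ, (∫ x in Set.Ioi (0:ℝ), x ^ z * Real.log x * w x) = P1 z := fun z =>
    setIntegral_congr_fun measurableSet_Ioi (fun x hx => e1 z x hx)
  have E2 : ∀ z : ℝ, (∫ x in Set.Ioi (0:ℝ), x ^ z * (Real.log x) ^ 2 * w x)
      = ∫ t in Set.Ioi (0:ℝ), t ^ (z - 1) * (Real.log t * g1 t) := fun z =>
    setIntegral_congr_fun measurableSet_Ioi (fun x hx => e2 z x hx)
  -- main per-point fact
  have key : ∀ α : ℝ, 0 < α →
      HasDerivAt h
        (((∫ x in Set.Ioi (0 : ℝ), x ^ α * (Real.log x) ^ 2 * w x)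
            * (∫ x in Set.Ioi (0 : ℝ), x ^ α * w x)
          - (∫ x in Set.Ioi (0 : ℝ), x ^ α * Real.log x * w x) ^ 2)
          / (∫ x in Set.Ioi (0 : ℝ), x ^ α * w x) ^ 2) α
      ∧ 0 <
        ((∫ x in Set.Ioi (0 : ℝ), x ^ α * (Real.log x) ^ 2 * w x)
            * (∫ x in Set.Ioi (0 : ℝ), x ^ α * w x)
          - (∫ x in Set.Ioi (0 : ℝ), x ^ α * Real.log x * w x) ^ 2)
          / (∫ x in Set.Ioi (0 : ℝ), x ^ α * w x) ^ 2 := by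
    intro α hα
    obtain ⟨I0, I1, D0⟩ := real_mellin_deriv gc gtop gbot (show (0:ℝ) < α from hα)
    have g1bot : g1 =O[𝓝[>] (0:ℝ)] fun x : ℝ => x ^ (-(α/2)) := by
      have hb := isBigO_rpow_zero_log_smul (show (0:ℝ) < α/2 by linarith) gbot
      refine hb.congr_left fun t => ?_
      simp [hg1, smul_eq_mul]
    obtain ⟨I1', I2, D1⟩ := real_mellin_deriv g1c g1top g1bot (show α/2 < α by linarith)
    -- values
    set A0 := ∫ x in Set.Ioi (0:ℝ), x ^ α * w x with hA0
    set A1 := ∫ x in Set.Ioi (0:ℝ), x ^ α * Real.log x * w x with hA1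
    set A2 := ∫ x in Set.Ioi (0:ℝ), x ^ α * (Real.log x) ^ 2 * w x with hA2
    have A0int : IntegrableOn (fun x : ℝ => x ^ α * w x) (Set.Ioi 0) :=
      I0.congr_fun (fun x hx => (e0 α x hx).symm) measurableSet_Ioi
    have A1int : IntegrableOn (fun x : ℝ => x ^ α * Real.log x * w x) (Set.Ioi 0) := by
      refine (I1.congr_fun (fun x hx => ?_) measurableSet_Ioi)
      exact (e1 α x hx).symm
    have A2int : IntegrableOn (fun x : ℝ => x ^ α * (Real.log x) ^ 2 * w x) (Set.Ioi 0) := by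
      refine (I2.congr_fun (fun x hx => ?_) measurableSet_Ioi)
      exact (e2 α x hx).symm
    have wpos := weibull_pos hα₀ hlam
    have A0pos : 0 < A0 := by
      rw [hA0, setIntegral_pos_iff_support_of_nonneg_ae]
      · refine lt_of_lt_of_le ?_ (measure_mono
          (show Set.Ioi (0:ℝ) ⊆
            Function.support (fun x : ℝ => x ^ α * w x) ∩ Set.Ioi 0 from ?_))
        · simp [Real.volume_Ioi]
        · intro x hx
          exact ⟨ne_of_gt (mul_pos (rpow_pos_of_pos hx α) (wpos x hx)), hx⟩
      · refine (ae_restrict_mem measurableSet_Ioi).mono fun x hx => ?_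
        exact (mul_pos (rpow_pos_of_pos (show (0:ℝ) < x from hx) α) (wpos x hx)).le
      · exact A0int
    -- variance positivity
    set m := A1 / A0 with hm
    have hmA : m * A0 = A1 := div_mul_cancel₀ _ A0pos.ne'
    have expand : (fun x : ℝ => (Real.log x - m)^2 * (x ^ α * w x))
        = fun x : ℝ => x ^ α * (Real.log x)^2 * w x
          - (2*m) * (x ^ α * Real.log x * w x)
          + m^2 * (x ^ α * w x) := funext fun x => by ring
    have Jpos : 0 < ∫ x in Set.Ioi (0:ℝ), (Real.log x - m)^2 * (x ^ α * w x) := by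
      rw [setIntegral_pos_iff_support_of_nonneg_ae]
      · refine lt_of_lt_of_le ?_ (measure_mono
          (show Set.Ioi 0 \ {Real.exp m} ⊆
            Function.support (fun x : ℝ => (Real.log x - m)^2 * (x ^ α * w x))
              ∩ Set.Ioi 0 from ?_))
        · rw [measure_diff_null (measure_singleton _)]
          simp [Real.volume_Ioi]
        · rintro x ⟨hx, hxm⟩
          refine ⟨?_, hx⟩
          have hlx : Real.log x - m ≠ 0 := by
            intro hc
            apply hxm
            have : Real.log x = m := by linarith [sub_eq_zero.mp hc]
            simp [← this, Real.exp_log (show (0:ℝ) < x from hx)]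
          exact mul_ne_zero (pow_ne_zero 2 hlx)
            (ne_of_gt (mul_pos (rpow_pos_of_pos (show (0:ℝ) < x from hx) α) (wpos x hx)))
      · refine (ae_restrict_mem measurableSet_Ioi).mono fun x hx => ?_
        have := (mul_pos (rpow_pos_of_pos (show (0:ℝ) < x from hx) α) (wpos x hx)).le
        positivity
      · rw [expand]
        exact (A2int.sub (A1int.const_mul (2*m))).add (A0int.const_mul (m^2))
    have Jval : (∫ x in Set.Ioi (0:ℝ), (Real.log x - m)^2 * (x ^ α * w x))
        = A2 - 2*m*A1 + m^2*A0 := by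
      rw [expand]
      have S1 : Integrable (fun x : ℝ => x ^ α * (Real.log x)^2 * w x
          - (2*m) * (x ^ α * Real.log x * w x)) (volume.restrict (Set.Ioi 0)) :=
        A2int.sub (A1int.const_mul (2*m))
      have S2 : Integrable (fun x : ℝ => (m^2) * (x ^ α * w x))
          (volume.restrict (Set.Ioi 0)) := A0int.const_mul (m^2)
      rw [integral_add S1 S2, integral_sub A2int (A1int.const_mul (2*m)),
        MeasureTheory.integral_const_mul, MeasureTheory.integral_const_mul]
    have numpos : 0 < A2 * A0 - A1 ^ 2 := by
      have hnum : A2 * A0 - A1 ^ 2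
          = A0 * (∫ x in Set.Ioi (0:ℝ), (Real.log x - m)^2 * (x ^ α * w x)) := by
        rw [Jval]
        have : m = A1 / A0 := hm
        field_simp [this]
        rw [← hmA]; ring
      rw [hnum]
      exact mul_pos A0pos Jpos
    have A0ne : P0 α ≠ 0 := by rw [← E0 α, ← hA0]; exact A0pos.ne'
    have D0' : HasDerivAt P0 (P1 α) α := D0
    have Dq : HasDerivAt (fun z => P1 z / P0 z)
        (((∫ t in Set.Ioi (0:ℝ), t ^ (α - 1) * (Real.log t * g1 t)) * P0 α
          - P1 α * P1 α) / P0 α ^ 2) α := D1.div D0' A0ne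
    have hfeq : h =ᶠ[𝓝 α] fun z => P1 z / P0 z := by
      filter_upwards [Ioi_mem_nhds hα] with z hz
      rw [hh z hz, E1 z, E0 z]
    have Dh := Dq.congr_of_eventuallyEq hfeq
    have hval : ((∫ t in Set.Ioi (0:ℝ), t ^ (α - 1) * (Real.log t * g1 t)) * P0 α
          - P1 α * P1 α) / P0 α ^ 2 = (A2 * A0 - A1 ^ 2) / A0 ^ 2 := by
      rw [← E2 α, ← E0 α, ← E1 α, ← hA0, ← hA1, ← hA2]
      ring
    rw [hval] at Dh
    exact ⟨Dh, div_pos numpos (pow_pos A0pos 2)⟩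
  refine ⟨key, ?_⟩
  have hc : ContinuousOn h (Set.Ioi 0) := fun x hx =>
    ((key x hx).1.continuousAt).continuousWithinAt
  refine strictMonoOn_of_deriv_pos (convex_Ioi 0) hc ?_
  intro x hx
  rw [interior_Ioi] at hx
  rw [(key x hx).1.deriv]
  exact (key x hx).2

end Main
end

section
/- Let X follow the two-parameter Weibull distribution with shape α₀ > 0 and scale λ > 0, and define the population score function g(α) = 1/α + E[log X] − E[X^{α} log X] / E[X^{α}] for α > 0. Then g is strictly decreasing on (0,∞) and has a unique zero, located at α = α₀. -/
open MeasureTheory Real Set Filter Topology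

noncomputable def Fe (t : ℝ) : ℝ := ∫ u in Set.Ioi (0:ℝ), u ^ t * Real.exp (-u)
noncomputable def Ge (t : ℝ) : ℝ := ∫ u in Set.Ioi (0:ℝ), u ^ t * Real.log u * Real.exp (-u)

lemma intF {t : ℝ} (ht : 0 ≤ t) :
    IntegrableOn (fun u : ℝ => u ^ t * Real.exp (-u)) (Ioi 0) := by
  have h := Real.GammaIntegral_convergent (show (0:ℝ) < t + 1 by linarith)
  simpa [add_sub_cancel_right, mul_comm] using h

lemma intG {t : ℝ} (ht : 0 ≤ t) :
    IntegrableOn (fun u : ℝ => u ^ t * Real.log u * Real.exp (-u)) (Ioi 0) := by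
  have h1 : IntegrableOn (fun u : ℝ => u ^ (t - 1/2) * Real.exp (-u)) (Ioi 0) := by
    have h := Real.GammaIntegral_convergent (show (0:ℝ) < t + 1/2 by linarith)
    rw [show t - 1/2 = t + 1/2 - 1 from by ring]
    simpa [mul_comm] using h
  have h2 : IntegrableOn (fun u : ℝ => u ^ (t + 1) * Real.exp (-u)) (Ioi 0) := by
    have h := Real.GammaIntegral_convergent (show (0:ℝ) < t + 2 by linarith)
    have : t + 2 - 1 = t + 1 := by ring
    simpa [this, mul_comm] using h
  have hbound : IntegrableOn
      (fun u : ℝ => 2 * (u ^ (t - 1/2) * Real.exp (-u)) + u ^ (t + 1) * Real.exp (-u)) (Ioi 0) :=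
    (h1.const_mul 2).add h2
  refine hbound.integrable.mono' ?_ ?_
  · apply AEStronglyMeasurable.mul
    · apply AEStronglyMeasurable.mul
      · exact (measurable_id.pow_const t).aestronglyMeasurable
      · exact Real.measurable_log.aestronglyMeasurable
    · exact (Real.continuous_exp.comp continuous_neg).aestronglyMeasurable
  · rw [ae_restrict_iff' measurableSet_Ioi]
    filter_upwards with u hu
    have hu0 : (0:ℝ) < u := hu
    have he : (0:ℝ) < Real.exp (-u) := Real.exp_pos _
    have hut : (0:ℝ) ≤ u ^ t := Real.rpow_nonneg hu0.le t
    rw [Real.norm_eq_abs, abs_mul, abs_mul, abs_of_nonneg hut, abs_of_pos he]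
    rcases le_total u 1 with h | h
    · have hlog : |Real.log u| ≤ 2 * u ^ (-(1:ℝ)/2) := by
        have hneg : Real.log u ≤ 0 := Real.log_nonpos hu0.le h
        rw [abs_of_nonpos hneg]
        have : Real.log (u ^ (-(1:ℝ)/2)) ≤ u ^ (-(1:ℝ)/2) - 1 :=
          Real.log_le_sub_one_of_pos (Real.rpow_pos_of_pos hu0 _)
        rw [Real.log_rpow hu0] at this
        nlinarith [Real.rpow_pos_of_pos hu0 (-(1:ℝ)/2)]
      have h1' : u ^ t * |Real.log u| * Real.exp (-u)
          ≤ 2 * (u ^ (t - 1/2) * Real.exp (-u)) := by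
        have : u ^ t * (2 * u ^ (-(1:ℝ)/2)) = 2 * u ^ (t - 1/2) := by
          rw [show u ^ t * (2 * u ^ (-(1:ℝ)/2)) = 2 * (u ^ t * u ^ (-(1:ℝ)/2)) from by ring,
            ← Real.rpow_add hu0]
          congr 2
          ring
        nlinarith [mul_le_mul_of_nonneg_left hlog hut]
      have : (0:ℝ) ≤ u ^ (t+1) * Real.exp (-u) :=
        mul_nonneg (Real.rpow_nonneg hu0.le _) he.le
      linarith
    · have hlog : |Real.log u| ≤ u := by
        rw [abs_of_nonneg (Real.log_nonneg h)]
        linarith [Real.log_le_sub_one_of_pos hu0]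
      have h1' : u ^ t * |Real.log u| * Real.exp (-u) ≤ u ^ (t + 1) * Real.exp (-u) := by
        have : u ^ t * u = u ^ (t + 1) := by
          rw [Real.rpow_add hu0, Real.rpow_one]
        nlinarith [mul_le_mul_of_nonneg_left hlog hut]
      have : (0:ℝ) ≤ 2 * (u ^ (t - 1/2) * Real.exp (-u)) :=
        by positivity
      linarith

lemma Fe_pos {t : ℝ} (ht : 0 ≤ t) : 0 < Fe t := by
  rw [Fe]
  rw [setIntegral_pos_iff_support_of_nonneg_ae]
  · apply lt_of_lt_of_le _ (measure_mono (show Ioi 1 ⊆ Function.support (fun u : ℝ => u ^ t * Real.exp (-u)) ∩ Ioi 0 from ?_))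
    · rw [Real.volume_Ioi]; exact ENNReal.zero_lt_top
    · intro u hu
      have hu1 : (1:ℝ) < u := hu
      constructor
      · exact ne_of_gt (mul_pos (Real.rpow_pos_of_pos (by linarith) t) (Real.exp_pos _))
      · exact lt_trans one_pos hu1
  · rw [EventuallyLE, ae_restrict_iff' measurableSet_Ioi]
    filter_upwards with u hu
    exact mul_nonneg (Real.rpow_nonneg (le_of_lt hu) t) (Real.exp_pos _).le
  · exact intF ht

lemma Fe_zero : Fe 0 = 1 := by
  rw [Fe]
  simp only [Real.rpow_zero, one_mul]
  exact integral_exp_neg_Ioi_zero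

lemma Fe_one : Fe 1 = 1 := by
  have h := Real.Gamma_eq_integral (show (0:ℝ) < 2 by norm_num)
  calc Fe 1 = ∫ x in Ioi (0:ℝ), Real.exp (-x) * x ^ ((2:ℝ) - 1) := by
        rw [Fe]
        apply setIntegral_congr_fun measurableSet_Ioi
        intro u hu
        simp only [show (2:ℝ) - 1 = 1 from by norm_num, Real.rpow_one]
        exact mul_comm _ _
    _ = Real.Gamma 2 := h.symm
    _ = 1 := Real.Gamma_two

lemma aux_hasDeriv {u : ℝ} (hu : 0 < u) :
    HasDerivAt (fun u : ℝ => -(u * Real.exp (-u) * Real.log u) - Real.exp (-u))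
      ((u - 1) * Real.log u * Real.exp (-u)) u := by
  have hexp : HasDerivAt (fun u : ℝ => Real.exp (-u)) (Real.exp (-u) * (-1)) u :=
    ((hasDerivAt_id u).neg).exp
  have h1 : HasDerivAt (fun u : ℝ => u * Real.exp (-u))
      (1 * Real.exp (-u) + u * (Real.exp (-u) * (-1))) u := (hasDerivAt_id u).mul hexp
  have h2 := (h1.mul (Real.hasDerivAt_log hu.ne')).neg.sub hexp
  refine h2.congr_deriv ?_
  rw [show u * Real.exp (-u) * u⁻¹ = Real.exp (-u) by rw [mul_comm u, mul_assoc, mul_inv_cancel₀ hu.ne', mul_one]]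
  ring

lemma aux_int : IntegrableOn (fun u : ℝ => (u - 1) * Real.log u * Real.exp (-u)) (Ioi 0) := by
  have h : IntegrableOn (fun u : ℝ =>
      u ^ (1:ℝ) * Real.log u * Real.exp (-u) - u ^ (0:ℝ) * Real.log u * Real.exp (-u))
      (Ioi 0) := (intG (le_of_lt one_pos)).sub (intG (le_refl (0:ℝ)))
  refine MeasureTheory.IntegrableOn.congr_fun h (fun u _ => ?_) measurableSet_Ioi
  simp only [Real.rpow_one, Real.rpow_zero]
  ring

lemma int_keyG : ∫ u in Ioi (0:ℝ), (u - 1) * Real.log u * Real.exp (-u) = 1 := by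
  have htop : Tendsto (fun u : ℝ => -(u * Real.exp (-u) * Real.log u) - Real.exp (-u))
      atTop (𝓝 0) := by
    have hmain : Tendsto (fun u : ℝ => u * Real.exp (-u) * Real.log u) atTop (𝓝 0) := by
      apply squeeze_zero' (g := fun u : ℝ => (u:ℝ) ^ (2:ℕ) * Real.exp (-u))
      · filter_upwards [eventually_ge_atTop (1:ℝ)] with u hu
        exact mul_nonneg (mul_nonneg (by linarith) (Real.exp_pos _).le)
          (Real.log_nonneg hu)
      · filter_upwards [eventually_ge_atTop (1:ℝ)] with u hu
        have hlog : Real.log u ≤ u := by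
          linarith [Real.log_le_sub_one_of_pos (show (0:ℝ) < u by linarith)]
        have : u * Real.exp (-u) * Real.log u ≤ u * Real.exp (-u) * u :=
          mul_le_mul_of_nonneg_left hlog (mul_nonneg (by linarith) (Real.exp_pos _).le)
        calc u * Real.exp (-u) * Real.log u ≤ u * Real.exp (-u) * u := this
          _ = u ^ (2:ℕ) * Real.exp (-u) := by ring
      · exact tendsto_pow_mul_exp_neg_atTop_nhds_zero 2
    have := (hmain.neg).sub Real.tendsto_exp_neg_atTop_nhds_zero
    simpa using this
  have hcont : ContinuousWithinAt
      (fun u : ℝ => -(u * Real.exp (-u) * Real.log u) - Real.exp (-u)) (Ici 0) 0 := by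
    rw [← continuousWithinAt_Ioi_iff_Ici]
    unfold ContinuousWithinAt
    have hval : (fun u : ℝ => -(u * Real.exp (-u) * Real.log u) - Real.exp (-u)) 0 = -1 := by
      norm_num
    rw [hval]
    have hmain : Tendsto (fun u : ℝ => u * Real.exp (-u) * Real.log u) (𝓝[>] 0) (𝓝 0) := by
      have h1 : Tendsto (fun u : ℝ => Real.log u * u ^ (1:ℝ)) (𝓝[>] 0) (𝓝 0) :=
        tendsto_log_mul_rpow_nhdsGT_zero one_pos
      have h2 : Tendsto (fun u : ℝ => Real.exp (-u)) (𝓝[>] 0) (𝓝 1) := by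
        have := ((Real.continuous_exp.comp continuous_neg).tendsto 0).mono_left
          (nhdsWithin_le_nhds (s := Ioi (0:ℝ)))
        simpa [Function.comp_def] using this
      have := h1.mul h2
      rw [zero_mul] at this
      apply this.congr
      intro u
      rw [Real.rpow_one]; ring
    have h2 : Tendsto (fun u : ℝ => Real.exp (-u)) (𝓝[>] 0) (𝓝 1) := by
      have := ((Real.continuous_exp.comp continuous_neg).tendsto 0).mono_left
        (nhdsWithin_le_nhds (s := Ioi (0:ℝ)))
      simpa [Function.comp_def] using this
    have := (hmain.neg).sub h2
    simpa using this
  have := integral_Ioi_of_hasDerivAt_of_tendsto hcont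
    (fun u hu => aux_hasDeriv (show (0:ℝ) < u from hu)) aux_int htop
  rw [this]
  simp

lemma Ge_diff : Ge 1 = Ge 0 + 1 := by
  have hsub : Ge 1 - Ge 0 = ∫ u in Ioi (0:ℝ), (u - 1) * Real.log u * Real.exp (-u) := by
    rw [Ge, Ge, ← integral_sub (intG (le_of_lt one_pos)) (intG (le_refl (0:ℝ)))]
    apply setIntegral_congr_fun measurableSet_Ioi
    intro u _
    simp only [Real.rpow_one, Real.rpow_zero]
    ring
  have := int_keyG
  linarith [hsub.trans this]

lemma point_ineq {s t u v : ℝ} (hst : s ≤ t) (hu : 0 < u) (hv : 0 < v) :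
    0 ≤ (u ^ s * Real.exp (-u) * (v ^ t * Real.log v * Real.exp (-v))
        - u ^ s * Real.log u * Real.exp (-u) * (v ^ t * Real.exp (-v)))
      + (u ^ t * Real.log u * Real.exp (-u) * (v ^ s * Real.exp (-v))
        - u ^ t * Real.exp (-u) * (v ^ s * Real.log v * Real.exp (-v))) := by
  have hu' : u ^ t = u ^ s * u ^ (t - s) := by
    rw [← Real.rpow_add hu]; congr 1; ring
  have hv' : v ^ t = v ^ s * v ^ (t - s) := by
    rw [← Real.rpow_add hv]; congr 1; ring
  rw [hu', hv']
  have hL : 0 ≤ (Real.log v - Real.log u) * (v ^ (t - s) - u ^ (t - s)) := by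
    rcases le_total u v with h | h
    · apply mul_nonneg
      · simp only [sub_nonneg]
        exact Real.log_le_log hu h
      · simp only [sub_nonneg]
        exact Real.rpow_le_rpow hu.le h (by linarith)
    · have h1 : Real.log v - Real.log u ≤ 0 := sub_nonpos.mpr (Real.log_le_log hv h)
      have h2 : v ^ (t - s) - u ^ (t - s) ≤ 0 :=
        sub_nonpos.mpr (Real.rpow_le_rpow hv.le h (by linarith))
      nlinarith
  have hC : 0 ≤ Real.exp (-u) * Real.exp (-v) * (u ^ s * v ^ s) := by positivity
  nlinarith [mul_nonneg hC hL]

lemma key_mono {s t : ℝ} (hs : 0 ≤ s) (hst : s ≤ t) : Ge s * Fe t ≤ Fe s * Ge t := by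
  have ht : 0 ≤ t := hs.trans hst
  set μ := volume.restrict (Ioi (0:ℝ)) with hμ
  set a : ℝ → ℝ := fun u => u ^ s * Real.exp (-u) with ha
  set b : ℝ → ℝ := fun u => u ^ t * Real.exp (-u) with hb
  set la : ℝ → ℝ := fun u => u ^ s * Real.log u * Real.exp (-u) with hla
  set lb : ℝ → ℝ := fun u => u ^ t * Real.log u * Real.exp (-u) with hlb
  have ia : Integrable a μ := intF hs
  have ib : Integrable b μ := intF ht
  have ila : Integrable la μ := intG hs
  have ilb : Integrable lb μ := intG ht
  have i1 : Integrable (fun z : ℝ × ℝ => a z.1 * lb z.2) (μ.prod μ) := ia.mul_prod ilb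
  have i2 : Integrable (fun z : ℝ × ℝ => la z.1 * b z.2) (μ.prod μ) := ila.mul_prod ib
  have i3 : Integrable (fun z : ℝ × ℝ => lb z.1 * a z.2) (μ.prod μ) := ilb.mul_prod ia
  have i4 : Integrable (fun z : ℝ × ℝ => b z.1 * la z.2) (μ.prod μ) := ib.mul_prod ila
  have e1 : ∫ z : ℝ × ℝ, a z.1 * lb z.2 ∂(μ.prod μ) = Fe s * Ge t := integral_prod_mul a lb
  have e2 : ∫ z : ℝ × ℝ, la z.1 * b z.2 ∂(μ.prod μ) = Ge s * Fe t := integral_prod_mul la b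
  have e3 : ∫ z : ℝ × ℝ, lb z.1 * a z.2 ∂(μ.prod μ) = Ge t * Fe s := integral_prod_mul lb a
  have e4 : ∫ z : ℝ × ℝ, b z.1 * la z.2 ∂(μ.prod μ) = Fe t * Ge s := integral_prod_mul b la
  have hsum : ∫ z : ℝ × ℝ, ((a z.1 * lb z.2 - la z.1 * b z.2)
      + (lb z.1 * a z.2 - b z.1 * la z.2)) ∂(μ.prod μ)
      = (Fe s * Ge t - Ge s * Fe t) + (Ge t * Fe s - Fe t * Ge s) := by
    have i12 : Integrable (fun z : ℝ × ℝ => a z.1 * lb z.2 - la z.1 * b z.2) (μ.prod μ) :=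
      i1.sub i2
    have i34 : Integrable (fun z : ℝ × ℝ => lb z.1 * a z.2 - b z.1 * la z.2) (μ.prod μ) :=
      i3.sub i4
    rw [integral_add i12 i34, integral_sub i1 i2, integral_sub i3 i4, e1, e2, e3, e4]
  have hnn : 0 ≤ ∫ z : ℝ × ℝ, ((a z.1 * lb z.2 - la z.1 * b z.2)
      + (lb z.1 * a z.2 - b z.1 * la z.2)) ∂(μ.prod μ) := by
    apply integral_nonneg_of_ae
    rw [hμ, Measure.prod_restrict, EventuallyLE,
      ae_restrict_iff' (measurableSet_Ioi.prod measurableSet_Ioi)]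
    filter_upwards with z hz
    simpa using point_ineq hst hz.1 hz.2
  rw [hsum] at hnn
  linarith


lemma weibull_change {α₀ lam : ℝ} (hα₀ : 0 < α₀) (hlam : 0 < lam) (φ : ℝ → ℝ) :
    ∫ x in Ioi (0:ℝ), φ x * weibullPDF α₀ lam x
      = ∫ u in Ioi (0:ℝ), φ (lam * u ^ α₀⁻¹) * Real.exp (-u) := by
  have hp : (0:ℝ) < α₀⁻¹ := inv_pos.mpr hα₀
  set f : ℝ → ℝ := fun u => lam * u ^ α₀⁻¹ with hf
  have hderiv : ∀ u ∈ Ioi (0:ℝ), HasDerivWithinAt f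
      (lam * (α₀⁻¹ * u ^ (α₀⁻¹ - 1))) (Ioi 0) u := by
    intro u hu
    exact ((Real.hasDerivAt_rpow_const (Or.inl (ne_of_gt hu))).const_mul lam).hasDerivWithinAt
  have hinj : InjOn f (Ioi 0) := by
    intro u hu v hv h
    have : (u : ℝ) ^ α₀⁻¹ = v ^ α₀⁻¹ :=
      mul_left_cancel₀ (ne_of_gt hlam) h
    have := congrArg (fun y : ℝ => y ^ α₀) this
    simpa [← Real.rpow_natCast, ← Real.rpow_mul (le_of_lt hu), ← Real.rpow_mul (le_of_lt hv),
      inv_mul_cancel₀ (ne_of_gt hα₀)] using this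
  have himg : f '' Ioi 0 = Ioi 0 := by
    ext x
    constructor
    · rintro ⟨u, hu, rfl⟩
      exact mul_pos hlam (Real.rpow_pos_of_pos hu _)
    · intro hx
      refine ⟨(x / lam) ^ α₀, Real.rpow_pos_of_pos (div_pos hx hlam) _, ?_⟩
      rw [hf]
      simp only
      rw [← Real.rpow_mul (div_pos hx hlam).le, mul_inv_cancel₀ (ne_of_gt hα₀), Real.rpow_one,
        mul_div_cancel₀ _ (ne_of_gt hlam)]
  have := integral_image_eq_integral_abs_deriv_smul measurableSet_Ioi hderiv hinj
    (fun x => φ x * weibullPDF α₀ lam x)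
  rw [himg] at this
  rw [this]
  apply setIntegral_congr_fun measurableSet_Ioi
  intro u hu
  have hu0 : (0:ℝ) < u := hu
  have hfu : f u / lam = u ^ α₀⁻¹ := by
    rw [hf]; field_simp
  have h1 : (u ^ α₀⁻¹ : ℝ) ^ (α₀ - 1) = u ^ (α₀⁻¹ * (α₀ - 1)) :=
    (Real.rpow_mul hu0.le _ _).symm
  have h2 : (u ^ α₀⁻¹ : ℝ) ^ α₀ = u := by
    rw [← Real.rpow_mul hu0.le, inv_mul_cancel₀ (ne_of_gt hα₀), Real.rpow_one]
  have hABone : u ^ (α₀⁻¹ - 1) * u ^ (α₀⁻¹ * (α₀ - 1)) = 1 := by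
    rw [← Real.rpow_add hu0, show α₀⁻¹ - 1 + α₀⁻¹ * (α₀ - 1) = α₀⁻¹ * α₀ - 1 from by ring,
      inv_mul_cancel₀ (ne_of_gt hα₀)]
    simp
  simp only [smul_eq_mul]
  rw [weibullPDF, hfu, h1, h2]
  have habs : |lam * (α₀⁻¹ * u ^ (α₀⁻¹ - 1))| = lam * (α₀⁻¹ * u ^ (α₀⁻¹ - 1)) := by
    apply abs_of_pos
    positivity
  rw [habs]
  have : lam * (α₀⁻¹ * u ^ (α₀⁻¹ - 1)) * (φ (f u) * (α₀ / lam * u ^ (α₀⁻¹ * (α₀ - 1)) * Real.exp (-u)))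
      = (u ^ (α₀⁻¹ - 1) * u ^ (α₀⁻¹ * (α₀ - 1))) * (α₀⁻¹ * α₀) * (lam / lam)
        * (φ (f u) * Real.exp (-u)) := by ring
  rw [this, hABone, inv_mul_cancel₀ (ne_of_gt hα₀), div_self (ne_of_gt hlam)]
  ring

lemma iexp : IntegrableOn (fun u : ℝ => Real.exp (-u)) (Ioi 0) := by
  simpa using intF (le_refl (0:ℝ))

lemma ilog : IntegrableOn (fun u : ℝ => Real.log u * Real.exp (-u)) (Ioi 0) := by
  have h := intG (le_refl (0:ℝ))
  simpa using h

lemma Ge0eq : Ge 0 = ∫ u in Ioi (0:ℝ), Real.log u * Real.exp (-u) := by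
  rw [Ge]
  simp only [Real.rpow_zero, one_mul]

lemma I1 {α₀ lam : ℝ} (hα₀ : 0 < α₀) (hlam : 0 < lam) :
    ∫ x in Ioi (0:ℝ), Real.log x * weibullPDF α₀ lam x
      = Real.log lam + α₀⁻¹ * Ge 0 := by
  rw [weibull_change hα₀ hlam Real.log]
  have hcong : ∀ u ∈ Ioi (0:ℝ), Real.log (lam * u ^ α₀⁻¹) * Real.exp (-u)
      = Real.log lam * Real.exp (-u) + α₀⁻¹ * (Real.log u * Real.exp (-u)) := by
    intro u hu
    rw [Real.log_mul (ne_of_gt hlam) (ne_of_gt (Real.rpow_pos_of_pos hu _)),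
      Real.log_rpow hu]
    ring
  rw [setIntegral_congr_fun measurableSet_Ioi hcong,
    integral_add (iexp.const_mul _) (ilog.const_mul _),
    MeasureTheory.integral_const_mul, MeasureTheory.integral_const_mul, integral_exp_neg_Ioi_zero, Ge0eq]
  ring

lemma I2 {α₀ lam : ℝ} (hα₀ : 0 < α₀) (hlam : 0 < lam) (α : ℝ) :
    ∫ x in Ioi (0:ℝ), x ^ α * weibullPDF α₀ lam x = lam ^ α * Fe (α / α₀) := by
  rw [weibull_change hα₀ hlam (fun x => x ^ α), Fe, ← MeasureTheory.integral_const_mul]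
  apply setIntegral_congr_fun measurableSet_Ioi
  intro u hu
  have hu0 : (0:ℝ) < u := hu
  simp only
  rw [Real.mul_rpow hlam.le (Real.rpow_nonneg hu0.le _), ← Real.rpow_mul hu0.le,
    show α₀⁻¹ * α = α / α₀ from by ring]
  ring

lemma I3 {α₀ lam : ℝ} (hα₀ : 0 < α₀) (hlam : 0 < lam) {α : ℝ} (hα : 0 ≤ α) :
    ∫ x in Ioi (0:ℝ), x ^ α * Real.log x * weibullPDF α₀ lam x
      = lam ^ α * (Real.log lam * Fe (α / α₀) + α₀⁻¹ * Ge (α / α₀)) := by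
  have ht : 0 ≤ α / α₀ := div_nonneg hα hα₀.le
  rw [weibull_change hα₀ hlam (fun x => x ^ α * Real.log x)]
  have hcong : ∀ u ∈ Ioi (0:ℝ),
      (lam * u ^ α₀⁻¹) ^ α * Real.log (lam * u ^ α₀⁻¹) * Real.exp (-u)
      = (lam ^ α * Real.log lam) * (u ^ (α / α₀) * Real.exp (-u))
        + (lam ^ α * α₀⁻¹) * (u ^ (α / α₀) * Real.log u * Real.exp (-u)) := by
    intro u hu
    have hu0 : (0:ℝ) < u := hu
    rw [Real.mul_rpow hlam.le (Real.rpow_nonneg hu0.le _), ← Real.rpow_mul hu0.le,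
      show α₀⁻¹ * α = α / α₀ from by ring,
      Real.log_mul (ne_of_gt hlam) (ne_of_gt (Real.rpow_pos_of_pos hu0 _)),
      Real.log_rpow hu0]
    ring
  rw [setIntegral_congr_fun measurableSet_Ioi hcong,
    integral_add ((intF ht).const_mul _) ((intG ht).const_mul _),
    MeasureTheory.integral_const_mul, MeasureTheory.integral_const_mul, ← Fe, ← Ge]
  ring

/-- For `X ~ Weibull(α₀, λ)`, the population score function
`g(α) = 1/α + E[log X] - E[X^α log X]/E[X^α]` is strictly decreasing on `(0,∞)`
and has a unique zero there, located at `α = α₀`. -/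
theorem weibull_population_score_strict_anti_unique_zero
    (α₀ lam : ℝ) (hα₀ : 0 < α₀) (hlam : 0 < lam)
    (g : ℝ → ℝ)
    (hg : ∀ α, 0 < α → g α =
      1 / α + (∫ x in Set.Ioi (0 : ℝ), Real.log x * weibullPDF α₀ lam x)
        - (∫ x in Set.Ioi (0 : ℝ), x ^ α * Real.log x * weibullPDF α₀ lam x)
          / (∫ x in Set.Ioi (0 : ℝ), x ^ α * weibullPDF α₀ lam x)) :
    StrictAntiOn g (Set.Ioi (0 : ℝ))
      ∧ (∀ α ∈ Set.Ioi (0 : ℝ), g α = 0 ↔ α = α₀) := by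
  have gform : ∀ α : ℝ, 0 < α →
      g α = 1 / α + α₀⁻¹ * Ge 0 - α₀⁻¹ * (Ge (α / α₀) / Fe (α / α₀)) := by
    intro α hα
    have ht : 0 ≤ α / α₀ := div_nonneg hα.le hα₀.le
    have hFe : 0 < Fe (α / α₀) := Fe_pos ht
    have hlamα : (0:ℝ) < lam ^ α := Real.rpow_pos_of_pos hlam α
    rw [hg α hα, I1 hα₀ hlam, I2 hα₀ hlam α, I3 hα₀ hlam hα.le]
    have hdiv : lam ^ α * (Real.log lam * Fe (α / α₀) + α₀⁻¹ * Ge (α / α₀))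
        / (lam ^ α * Fe (α / α₀))
        = Real.log lam + α₀⁻¹ * (Ge (α / α₀) / Fe (α / α₀)) := by
      rw [mul_div_mul_left _ _ (ne_of_gt hlamα)]
      field_simp
    rw [hdiv]
    ring
  have hanti : StrictAntiOn g (Set.Ioi (0 : ℝ)) := by
    intro α₁ h1 α₂ h2 h12
    have h1' : (0:ℝ) < α₁ := h1
    have h2' : (0:ℝ) < α₂ := h2
    have ht1 : 0 ≤ α₁ / α₀ := div_nonneg h1'.le hα₀.le
    have ht12 : α₁ / α₀ ≤ α₂ / α₀ := by
      exact (div_le_div_iff_of_pos_right hα₀).mpr h12.le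
    have hQ : Ge (α₁ / α₀) / Fe (α₁ / α₀) ≤ Ge (α₂ / α₀) / Fe (α₂ / α₀) := by
      have hF1 : 0 < Fe (α₁ / α₀) := Fe_pos ht1
      have hF2 : 0 < Fe (α₂ / α₀) := Fe_pos (ht1.trans ht12)
      rw [div_le_div_iff₀ hF1 hF2]
      have := key_mono ht1 ht12
      linarith
    have hinv : 1 / α₂ < 1 / α₁ := one_div_lt_one_div_of_lt h1' h12
    have hmul : α₀⁻¹ * (Ge (α₁ / α₀) / Fe (α₁ / α₀)) ≤ α₀⁻¹ * (Ge (α₂ / α₀) / Fe (α₂ / α₀)) :=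
      mul_le_mul_of_nonneg_left hQ (inv_nonneg.mpr hα₀.le)
    rw [gform α₁ h1', gform α₂ h2']
    linarith
  have hzero : g α₀ = 0 := by
    rw [gform α₀ hα₀, div_self (ne_of_gt hα₀), Fe_one, Ge_diff]
    field_simp
    ring
  refine ⟨hanti, fun α hα => ⟨fun h0 => ?_, fun h => h ▸ hzero⟩⟩
  have hα' : (0:ℝ) < α := hα
  rcases lt_trichotomy α α₀ with hlt | heq | hgt
  · have := hanti hα (show α₀ ∈ Set.Ioi (0:ℝ) from hα₀) hlt
    rw [h0, hzero] at this
    exact absurd this (lt_irrefl 0)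
  · exact heq
  · have := hanti (show α₀ ∈ Set.Ioi (0:ℝ) from hα₀) hα hgt
    rw [h0, hzero] at this
    exact absurd this (lt_irrefl 0)
end

section
/- Let X follow the two-parameter Weibull distribution with shape α₀ > 0 and scale λ > 0, let T > 0 and r* ≥ 0, and define g(α) = 1/α + E[log X] − ( E[X^{α} log X] + r* T^{α} log T ) / ( E[X^{α}] + r* T^{α} ) for α > 0. Then g is strictly decreasing on (0,∞); in particular g has at most one zero in (0,∞). -/
open MeasureTheory Real

section weibullAuxiliary
open Set


lemma wmul {α₁ α₂ x y : ℝ} (h : α₁ ≤ α₂) (hx : 0 < x) (hy : 0 < y) (hxy : x ≤ y) :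
    x ^ α₂ * y ^ α₁ ≤ x ^ α₁ * y ^ α₂ := by
  have e1 : x ^ α₂ = x ^ α₁ * x ^ (α₂ - α₁) := by
    rw [← Real.rpow_add hx]; ring_nf
  have e2 : y ^ α₂ = y ^ α₁ * y ^ (α₂ - α₁) := by
    rw [← Real.rpow_add hy]; ring_nf
  have h3 : x ^ (α₂ - α₁) ≤ y ^ (α₂ - α₁) :=
    Real.rpow_le_rpow hx.le hxy (sub_nonneg.2 h)
  have h4 : x ^ (α₂ - α₁) * (x ^ α₁ * y ^ α₁) ≤ y ^ (α₂ - α₁) * (x ^ α₁ * y ^ α₁) :=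
    mul_le_mul_of_nonneg_right h3 (by positivity)
  rw [e1, e2]
  calc x ^ α₁ * x ^ (α₂ - α₁) * y ^ α₁ = x ^ (α₂ - α₁) * (x ^ α₁ * y ^ α₁) := by ring
    _ ≤ y ^ (α₂ - α₁) * (x ^ α₁ * y ^ α₁) := h4
    _ = x ^ α₁ * (y ^ α₁ * y ^ (α₂ - α₁)) := by ring

lemma wsign {α₁ α₂ x y : ℝ} (h : α₁ ≤ α₂) (hx : 0 < x) (hy : 0 < y) :
    0 ≤ (Real.log x - Real.log y) * (x ^ α₂ * y ^ α₁ - x ^ α₁ * y ^ α₂) := by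
  rcases le_total x y with hxy | hxy
  · have h1 : Real.log x - Real.log y ≤ 0 := sub_nonpos.2 (Real.log_le_log hx hxy)
    have h2 : x ^ α₂ * y ^ α₁ - x ^ α₁ * y ^ α₂ ≤ 0 := sub_nonpos.2 (wmul h hx hy hxy)
    have := mul_nonneg (neg_nonneg.2 h1) (neg_nonneg.2 h2)
    rwa [neg_mul_neg] at this
  · refine mul_nonneg (sub_nonneg.2 (Real.log_le_log hy hxy)) (sub_nonneg.2 ?_)
    rw [mul_comm, mul_comm (x ^ α₂)]
    exact wmul h hy hx hxy

lemma wintA {b p c : ℝ} (hb : 0 < b) (hp : 0 < p) (hc : -1 < c) :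
    IntegrableOn (fun x : ℝ => x ^ c * Real.exp (-(b * x ^ p))) (Set.Ioi 0) := by
  set t : ℝ := (c + 1) / p - 1 with ht
  have h1 : IntegrableOn (fun y : ℝ => Real.exp (-y) * y ^ ((c + 1) / p - 1)) (Set.Ioi 0) :=
    Real.GammaIntegral_convergent (div_pos (by linarith) hp)
  have h2 : IntegrableOn (fun y : ℝ => Real.exp (-(b * y)) * (b * y) ^ t) (Set.Ioi 0) := by
    have := (integrableOn_Ioi_comp_mul_left_iff
      (fun y : ℝ => Real.exp (-y) * y ^ t) 0 hb).2 (by simpa using h1)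
    simpa using this
  have h3 : IntegrableOn (fun y : ℝ => y ^ t * Real.exp (-(b * y))) (Set.Ioi 0) := by
    have h2' : IntegrableOn
        (fun y : ℝ => b ^ (-t) * (Real.exp (-(b * y)) * (b * y) ^ t)) (Set.Ioi 0) :=
      h2.const_mul _
    refine h2'.congr_fun (fun y hy => ?_) measurableSet_Ioi
    have hy0 : (0:ℝ) < y := hy
    dsimp only
    rw [Real.mul_rpow hb.le hy0.le]
    rw [show b ^ (-t) * (Real.exp (-(b * y)) * (b ^ t * y ^ t))
        = (b ^ (-t) * b ^ t) * (y ^ t * Real.exp (-(b * y))) by ring,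
      ← Real.rpow_add hb]
    simp
  have h4 := (integrableOn_Ioi_comp_rpow_iff'
    (fun y : ℝ => y ^ t * Real.exp (-(b * y))) (ne_of_gt hp)).2 h3
  refine h4.congr_fun (fun x hx => ?_) measurableSet_Ioi
  have hx0 : (0:ℝ) < x := hx
  have e1 : (x ^ p) ^ t = x ^ (p * t) := (Real.rpow_mul hx0.le p t).symm
  have e2 : p * t = c + 1 - p := by rw [ht]; field_simp
  simp only [smul_eq_mul, e1, e2]
  rw [show x ^ (p - 1) * (x ^ (c + 1 - p) * Real.exp (-(b * x ^ p)))
      = (x ^ (p - 1) * x ^ (c + 1 - p)) * Real.exp (-(b * x ^ p)) by ring,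
    ← Real.rpow_add hx0]
  ring_nf

lemma wlogbound {x ε : ℝ} (hx : 0 < x) (hε : 0 < ε) :
    |Real.log x| ≤ ε⁻¹ * x ^ (-ε) + x := by
  have hpos : 0 ≤ ε⁻¹ * x ^ (-ε) := by positivity
  rcases abs_cases (Real.log x) with ⟨h, _⟩ | ⟨h, _⟩
  · rw [h]
    have := Real.log_le_sub_one_of_pos hx
    linarith
  · rw [h, ← Real.log_inv]
    have h2 := Real.log_le_rpow_div (inv_nonneg.2 hx.le) hε
    rw [Real.inv_rpow hx.le, ← Real.rpow_neg hx.le, div_eq_inv_mul] at h2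
    linarith

lemma wintB {b p c : ℝ} (hb : 0 < b) (hp : 0 < p) (hc : -1 < c) :
    IntegrableOn (fun x : ℝ => x ^ c * Real.log x * Real.exp (-(b * x ^ p))) (Set.Ioi 0) := by
  set ε : ℝ := (c + 1) / 2 with hεdef
  have hε : 0 < ε := by rw [hεdef]; linarith
  have hc1 : (-1 : ℝ) < c - ε := by rw [hεdef]; linarith
  have hdom : IntegrableOn (fun x : ℝ =>
      ε⁻¹ * (x ^ (c - ε) * Real.exp (-(b * x ^ p)))
        + x ^ (c + 1) * Real.exp (-(b * x ^ p))) (Set.Ioi 0) :=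
    ((wintA hb hp hc1).const_mul _).add (wintA hb hp (by linarith))
  refine hdom.mono' ?_ ?_
  · have c1 : ContinuousOn (fun x : ℝ => x ^ c) (Set.Ioi 0) := fun x hx =>
      (Real.continuousAt_rpow_const x c (Or.inl (ne_of_gt hx))).continuousWithinAt
    have c2 : ContinuousOn Real.log (Set.Ioi 0) :=
      Real.continuousOn_log.mono (fun x hx => ne_of_gt hx)
    have c3 : ContinuousOn (fun x : ℝ => Real.exp (-(b * x ^ p))) (Set.Ioi 0) := by
      refine Real.continuous_exp.comp_continuousOn ?_
      refine (continuousOn_const.mul (fun x hx => ?_)).neg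
      exact (Real.continuousAt_rpow_const x p (Or.inl (ne_of_gt hx))).continuousWithinAt
    exact ((c1.mul c2).mul c3).aestronglyMeasurable measurableSet_Ioi
  · rw [ae_restrict_iff' measurableSet_Ioi]
    refine Filter.Eventually.of_forall (fun x hx => ?_)
    have hx0 : (0:ℝ) < x := hx
    have hxc : 0 < x ^ c := Real.rpow_pos_of_pos hx0 c
    have hex : 0 < Real.exp (-(b * x ^ p)) := Real.exp_pos _
    have hb1 := wlogbound hx0 hε
    have e1 : x ^ c * x ^ (-ε) = x ^ (c - ε) := by rw [← Real.rpow_add hx0]; ring_nf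
    have e2 : x ^ c * x = x ^ (c + 1) := by
      rw [show x ^ c * x = x ^ c * x ^ (1:ℝ) by rw [Real.rpow_one], ← Real.rpow_add hx0]
    calc ‖x ^ c * Real.log x * Real.exp (-(b * x ^ p))‖
        = x ^ c * |Real.log x| * Real.exp (-(b * x ^ p)) := by
          rw [norm_eq_abs, abs_mul, abs_mul, abs_of_pos hxc, abs_of_pos hex]
      _ ≤ x ^ c * (ε⁻¹ * x ^ (-ε) + x) * Real.exp (-(b * x ^ p)) := by
          have := mul_le_mul_of_nonneg_left hb1 hxc.le
          exact mul_le_mul_of_nonneg_right this hex.le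
      _ = ε⁻¹ * (x ^ (c - ε) * Real.exp (-(b * x ^ p)))
          + x ^ (c + 1) * Real.exp (-(b * x ^ p)) := by rw [← e1, ← e2]; ring

lemma wpdf_pos {a l x : ℝ} (ha : 0 < a) (hl : 0 < l) (hx : 0 < x) :
    0 < weibullPDF a l x := by
  unfold weibullPDF
  have h1 : 0 < x / l := div_pos hx hl
  positivity

lemma wpdf_eq {a l : ℝ} (ha : 0 < a) (hl : 0 < l) {x : ℝ} (hx : 0 < x) (β : ℝ) :
    x ^ β * weibullPDF a l x
      = (a * l ^ (-a)) * (x ^ (β + a - 1) * Real.exp (-(l ^ (-a) * x ^ a))) := by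
  unfold weibullPDF
  have h1 : (x / l) ^ (a - 1) = x ^ (a - 1) * l ^ (-(a - 1)) := by
    rw [div_eq_mul_inv, Real.mul_rpow hx.le (inv_nonneg.2 hl.le), Real.inv_rpow hl.le,
      ← Real.rpow_neg hl.le]
  have h2 : (x / l) ^ a = l ^ (-a) * x ^ a := by
    rw [div_eq_mul_inv, Real.mul_rpow hx.le (inv_nonneg.2 hl.le), Real.inv_rpow hl.le,
      ← Real.rpow_neg hl.le]; ring
  have h3 : x ^ β * x ^ (a - 1) = x ^ (β + a - 1) := by rw [← Real.rpow_add hx]; ring_nf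
  have h4 : a / l * l ^ (-(a - 1)) = a * l ^ (-a) := by
    rw [div_eq_mul_inv, ← Real.rpow_neg_one l, mul_assoc, ← Real.rpow_add hl]
    ring_nf
  rw [h1, h2, ← h3, ← h4]
  ring

lemma wint1 {a l : ℝ} (β : ℝ) (ha : 0 < a) (hl : 0 < l) (hβ : 0 ≤ β) :
    IntegrableOn (fun x : ℝ => x ^ β * weibullPDF a l x) (Set.Ioi 0) := by
  have hb : 0 < l ^ (-a) := Real.rpow_pos_of_pos hl _
  have h := (wintA hb ha (show (-1:ℝ) < β + a - 1 by linarith)).const_mul (a * l ^ (-a))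
  exact (IntegrableOn.congr_fun h (fun x hx => (wpdf_eq ha hl hx β).symm) measurableSet_Ioi)

lemma wint2 {a l : ℝ} (β : ℝ) (ha : 0 < a) (hl : 0 < l) (hβ : 0 ≤ β) :
    IntegrableOn (fun x : ℝ => x ^ β * Real.log x * weibullPDF a l x) (Set.Ioi 0) := by
  have hb : 0 < l ^ (-a) := Real.rpow_pos_of_pos hl _
  have h := (wintB hb ha (show (-1:ℝ) < β + a - 1 by linarith)).const_mul (a * l ^ (-a))
  refine IntegrableOn.congr_fun h (fun x hx => ?_) measurableSet_Ioi
  have hx0 : (0:ℝ) < x := hx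
  have := wpdf_eq ha hl hx0 β
  calc a * l ^ (-a) * (x ^ (β + a - 1) * Real.log x * Real.exp (-(l ^ (-a) * x ^ a)))
      = (a * l ^ (-a) * (x ^ (β + a - 1) * Real.exp (-(l ^ (-a) * x ^ a)))) * Real.log x := by
        ring
    _ = (x ^ β * weibullPDF a l x) * Real.log x := by rw [← this]
    _ = x ^ β * Real.log x * weibullPDF a l x := by ring

lemma wpos {a l : ℝ} (β : ℝ) (ha : 0 < a) (hl : 0 < l) (hβ : 0 ≤ β) :
    0 < ∫ x in Set.Ioi (0:ℝ), x ^ β * weibullPDF a l x := by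
  have hint := wint1 β ha hl hβ
  have hnn : 0 ≤ᵐ[volume.restrict (Set.Ioi (0:ℝ))]
      fun x : ℝ => x ^ β * weibullPDF a l x := by
    rw [Filter.EventuallyLE, ae_restrict_iff' measurableSet_Ioi]
    refine Filter.Eventually.of_forall (fun x hx => ?_)
    have hx0 : (0:ℝ) < x := hx
    exact le_of_lt (mul_pos (Real.rpow_pos_of_pos hx0 β) (wpdf_pos ha hl hx0))
  rw [setIntegral_pos_iff_support_of_nonneg_ae hnn hint]
  have hsub : Set.Ioi (0:ℝ) ⊆ Function.support (fun x : ℝ => x ^ β * weibullPDF a l x) := by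
    intro x hx
    have hx0 : (0:ℝ) < x := hx
    exact ne_of_gt (mul_pos (Real.rpow_pos_of_pos hx0 β) (wpdf_pos ha hl hx0))
  have : (Function.support (fun x : ℝ => x ^ β * weibullPDF a l x)) ∩ Set.Ioi 0
      = Set.Ioi 0 := Set.inter_eq_self_of_subset_right hsub
  rw [this]
  simp

end weibullAuxiliary

lemma wcheb {a l : ℝ} (ha : 0 < a) (hl : 0 < l) {α₁ α₂ : ℝ}
    (h₁ : 0 < α₁) (h₂ : 0 < α₂) (h : α₁ ≤ α₂) :
    (∫ x in Set.Ioi (0:ℝ), x ^ α₁ * Real.log x * weibullPDF a l x)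
      * (∫ x in Set.Ioi (0:ℝ), x ^ α₂ * weibullPDF a l x)
    ≤ (∫ x in Set.Ioi (0:ℝ), x ^ α₂ * Real.log x * weibullPDF a l x)
      * (∫ x in Set.Ioi (0:ℝ), x ^ α₁ * weibullPDF a l x) := by
  have iI₁ := wint1 (a := a) (l := l) α₁ ha hl h₁.le
  have iI₂ := wint1 (a := a) (l := l) α₂ ha hl h₂.le
  have iJ₁ := wint2 (a := a) (l := l) α₁ ha hl h₁.le
  have iJ₂ := wint2 (a := a) (l := l) α₂ ha hl h₂.le
  set I₁ := ∫ x in Set.Ioi (0:ℝ), x ^ α₁ * weibullPDF a l x with hI₁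
  set I₂ := ∫ x in Set.Ioi (0:ℝ), x ^ α₂ * weibullPDF a l x with hI₂
  set J₁ := ∫ x in Set.Ioi (0:ℝ), x ^ α₁ * Real.log x * weibullPDF a l x with hJ₁
  set J₂ := ∫ x in Set.Ioi (0:ℝ), x ^ α₂ * Real.log x * weibullPDF a l x with hJ₂
  set F : ℝ → ℝ := fun x => x ^ α₂ * Real.log x * weibullPDF a l x * I₁
      - x ^ α₁ * Real.log x * weibullPDF a l x * I₂
      - x ^ α₂ * weibullPDF a l x * J₁
      + x ^ α₁ * weibullPDF a l x * J₂ with hF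
  have hFval : (∫ x in Set.Ioi (0:ℝ), F x) = 2 * (J₂ * I₁ - J₁ * I₂) := by
    simp only [hF]
    have hA : Integrable (fun x : ℝ => x ^ α₂ * Real.log x * weibullPDF a l x * I₁)
        (volume.restrict (Set.Ioi (0:ℝ))) := iJ₂.mul_const I₁
    have hB : Integrable (fun x : ℝ => x ^ α₁ * Real.log x * weibullPDF a l x * I₂)
        (volume.restrict (Set.Ioi (0:ℝ))) := iJ₁.mul_const I₂
    have hC : Integrable (fun x : ℝ => x ^ α₂ * weibullPDF a l x * J₁)
        (volume.restrict (Set.Ioi (0:ℝ))) := iI₂.mul_const J₁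
    have hD : Integrable (fun x : ℝ => x ^ α₁ * weibullPDF a l x * J₂)
        (volume.restrict (Set.Ioi (0:ℝ))) := iI₁.mul_const J₂
    have hAB : Integrable (fun x : ℝ => x ^ α₂ * Real.log x * weibullPDF a l x * I₁
        - x ^ α₁ * Real.log x * weibullPDF a l x * I₂)
        (volume.restrict (Set.Ioi (0:ℝ))) := hA.sub hB
    have hABC : Integrable (fun x : ℝ => x ^ α₂ * Real.log x * weibullPDF a l x * I₁
        - x ^ α₁ * Real.log x * weibullPDF a l x * I₂
        - x ^ α₂ * weibullPDF a l x * J₁)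
        (volume.restrict (Set.Ioi (0:ℝ))) := hAB.sub hC
    rw [integral_add hABC hD, integral_sub hAB hC, integral_sub hA hB,
      integral_mul_const, integral_mul_const, integral_mul_const, integral_mul_const,
      ← hI₁, ← hI₂, ← hJ₁, ← hJ₂]
    ring
  have hFnn : ∀ x ∈ Set.Ioi (0:ℝ), 0 ≤ F x := by
    intro x hx
    have hx0 : (0:ℝ) < x := hx
    have hFx : F x = ∫ y in Set.Ioi (0:ℝ),
        (Real.log x - Real.log y) * (x ^ α₂ * y ^ α₁ - x ^ α₁ * y ^ α₂)
          * (weibullPDF a l x * weibullPDF a l y) := by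
      have expand : ∀ y : ℝ,
          (Real.log x - Real.log y) * (x ^ α₂ * y ^ α₁ - x ^ α₁ * y ^ α₂)
            * (weibullPDF a l x * weibullPDF a l y)
          = (Real.log x * x ^ α₂ * weibullPDF a l x) * (y ^ α₁ * weibullPDF a l y)
            - (Real.log x * x ^ α₁ * weibullPDF a l x) * (y ^ α₂ * weibullPDF a l y)
            - (x ^ α₂ * weibullPDF a l x) * (y ^ α₁ * Real.log y * weibullPDF a l y)
            + (x ^ α₁ * weibullPDF a l x) * (y ^ α₂ * Real.log y * weibullPDF a l y) :=
        fun y => by ring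
      simp only [expand]
      have hA : Integrable (fun y : ℝ =>
          Real.log x * x ^ α₂ * weibullPDF a l x * (y ^ α₁ * weibullPDF a l y))
          (volume.restrict (Set.Ioi (0:ℝ))) := iI₁.const_mul _
      have hB : Integrable (fun y : ℝ =>
          Real.log x * x ^ α₁ * weibullPDF a l x * (y ^ α₂ * weibullPDF a l y))
          (volume.restrict (Set.Ioi (0:ℝ))) := iI₂.const_mul _
      have hC : Integrable (fun y : ℝ =>
          x ^ α₂ * weibullPDF a l x * (y ^ α₁ * Real.log y * weibullPDF a l y))
          (volume.restrict (Set.Ioi (0:ℝ))) := iJ₁.const_mul _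
      have hD : Integrable (fun y : ℝ =>
          x ^ α₁ * weibullPDF a l x * (y ^ α₂ * Real.log y * weibullPDF a l y))
          (volume.restrict (Set.Ioi (0:ℝ))) := iJ₂.const_mul _
      have hAB : Integrable (fun y : ℝ =>
          Real.log x * x ^ α₂ * weibullPDF a l x * (y ^ α₁ * weibullPDF a l y)
          - Real.log x * x ^ α₁ * weibullPDF a l x * (y ^ α₂ * weibullPDF a l y))
          (volume.restrict (Set.Ioi (0:ℝ))) := hA.sub hB
      have hABC : Integrable (fun y : ℝ =>
          Real.log x * x ^ α₂ * weibullPDF a l x * (y ^ α₁ * weibullPDF a l y)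
          - Real.log x * x ^ α₁ * weibullPDF a l x * (y ^ α₂ * weibullPDF a l y)
          - x ^ α₂ * weibullPDF a l x * (y ^ α₁ * Real.log y * weibullPDF a l y))
          (volume.restrict (Set.Ioi (0:ℝ))) := hAB.sub hC
      rw [integral_add hABC hD, integral_sub hAB hC, integral_sub hA hB,
        integral_const_mul, integral_const_mul, integral_const_mul, integral_const_mul,
        ← hI₁, ← hI₂, ← hJ₁, ← hJ₂, hF]
      ring
    rw [hFx]
    refine setIntegral_nonneg measurableSet_Ioi (fun y hy => ?_)
    exact mul_nonneg (wsign h hx0 hy)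
      (mul_nonneg (wpdf_pos ha hl hx0).le (wpdf_pos ha hl hy).le)
  have h0 : (0:ℝ) ≤ ∫ x in Set.Ioi (0:ℝ), F x :=
    setIntegral_nonneg measurableSet_Ioi hFnn
  rw [hFval] at h0
  linarith

lemma wcross {a l : ℝ} (ha : 0 < a) (hl : 0 < l) {α₁ α₂ T : ℝ}
    (h₁ : 0 < α₁) (h₂ : 0 < α₂) (hT : 0 < T) (h : α₁ ≤ α₂) :
    0 ≤ T ^ α₁ * (∫ x in Set.Ioi (0:ℝ), x ^ α₂ * Real.log x * weibullPDF a l x)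
        - T ^ α₂ * (∫ x in Set.Ioi (0:ℝ), x ^ α₁ * Real.log x * weibullPDF a l x)
        - Real.log T * T ^ α₁ * (∫ x in Set.Ioi (0:ℝ), x ^ α₂ * weibullPDF a l x)
        + Real.log T * T ^ α₂ * (∫ x in Set.Ioi (0:ℝ), x ^ α₁ * weibullPDF a l x) := by
  have iI₁ := wint1 (a := a) (l := l) α₁ ha hl h₁.le
  have iI₂ := wint1 (a := a) (l := l) α₂ ha hl h₂.le
  have iJ₁ := wint2 (a := a) (l := l) α₁ ha hl h₁.le
  have iJ₂ := wint2 (a := a) (l := l) α₂ ha hl h₂.le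
  set I₁ := ∫ x in Set.Ioi (0:ℝ), x ^ α₁ * weibullPDF a l x with hI₁
  set I₂ := ∫ x in Set.Ioi (0:ℝ), x ^ α₂ * weibullPDF a l x with hI₂
  set J₁ := ∫ x in Set.Ioi (0:ℝ), x ^ α₁ * Real.log x * weibullPDF a l x with hJ₁
  set J₂ := ∫ x in Set.Ioi (0:ℝ), x ^ α₂ * Real.log x * weibullPDF a l x with hJ₂
  have expand : ∀ x : ℝ,
      (Real.log x - Real.log T) * (x ^ α₂ * T ^ α₁ - x ^ α₁ * T ^ α₂) * weibullPDF a l x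
      = T ^ α₁ * (x ^ α₂ * Real.log x * weibullPDF a l x)
        - T ^ α₂ * (x ^ α₁ * Real.log x * weibullPDF a l x)
        - (Real.log T * T ^ α₁) * (x ^ α₂ * weibullPDF a l x)
        + (Real.log T * T ^ α₂) * (x ^ α₁ * weibullPDF a l x) := fun x => by ring
  have h0 : 0 ≤ ∫ x in Set.Ioi (0:ℝ),
      (Real.log x - Real.log T) * (x ^ α₂ * T ^ α₁ - x ^ α₁ * T ^ α₂) * weibullPDF a l x := by
    refine setIntegral_nonneg measurableSet_Ioi (fun x hx => ?_)
    exact mul_nonneg (wsign h hx hT) (wpdf_pos ha hl hx).le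
  have hval : (∫ x in Set.Ioi (0:ℝ),
      (Real.log x - Real.log T) * (x ^ α₂ * T ^ α₁ - x ^ α₁ * T ^ α₂) * weibullPDF a l x)
      = T ^ α₁ * J₂ - T ^ α₂ * J₁ - Real.log T * T ^ α₁ * I₂ + Real.log T * T ^ α₂ * I₁ := by
    simp only [expand]
    have hA : Integrable (fun x : ℝ =>
        T ^ α₁ * (x ^ α₂ * Real.log x * weibullPDF a l x))
        (volume.restrict (Set.Ioi (0:ℝ))) := iJ₂.const_mul _
    have hB : Integrable (fun x : ℝ =>
        T ^ α₂ * (x ^ α₁ * Real.log x * weibullPDF a l x))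
        (volume.restrict (Set.Ioi (0:ℝ))) := iJ₁.const_mul _
    have hC : Integrable (fun x : ℝ =>
        Real.log T * T ^ α₁ * (x ^ α₂ * weibullPDF a l x))
        (volume.restrict (Set.Ioi (0:ℝ))) := iI₂.const_mul _
    have hD : Integrable (fun x : ℝ =>
        Real.log T * T ^ α₂ * (x ^ α₁ * weibullPDF a l x))
        (volume.restrict (Set.Ioi (0:ℝ))) := iI₁.const_mul _
    have hAB : Integrable (fun x : ℝ =>
        T ^ α₁ * (x ^ α₂ * Real.log x * weibullPDF a l x)
        - T ^ α₂ * (x ^ α₁ * Real.log x * weibullPDF a l x))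
        (volume.restrict (Set.Ioi (0:ℝ))) := hA.sub hB
    have hABC : Integrable (fun x : ℝ =>
        T ^ α₁ * (x ^ α₂ * Real.log x * weibullPDF a l x)
        - T ^ α₂ * (x ^ α₁ * Real.log x * weibullPDF a l x)
        - Real.log T * T ^ α₁ * (x ^ α₂ * weibullPDF a l x))
        (volume.restrict (Set.Ioi (0:ℝ))) := hAB.sub hC
    rw [integral_add hABC hD, integral_sub hAB hC, integral_sub hA hB,
      integral_const_mul, integral_const_mul, integral_const_mul, integral_const_mul,
      ← hI₁, ← hI₂, ← hJ₁, ← hJ₂]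
  rw [hval] at h0
  linarith

/-- For `X ~ Weibull(α₀, λ)`, `T > 0` and `r* ≥ 0`, the PHC population score function
`g(α) = 1/α + E[log X] - (E[X^α log X] + r* T^α log T)/(E[X^α] + r* T^α)` is strictly
decreasing on `(0,∞)`; in particular it has at most one zero in `(0,∞)`. -/
theorem weibull_phc_population_score_strict_anti
    (α₀ lam T rstar : ℝ) (hα₀ : 0 < α₀) (hlam : 0 < lam) (hT : 0 < T) (hr : 0 ≤ rstar)
    (g : ℝ → ℝ)
    (hg : ∀ α, 0 < α → g α =
      1 / α + (∫ x in Set.Ioi (0 : ℝ), Real.log x * weibullPDF α₀ lam x)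
        - ((∫ x in Set.Ioi (0 : ℝ), x ^ α * Real.log x * weibullPDF α₀ lam x)
              + rstar * T ^ α * Real.log T)
          / ((∫ x in Set.Ioi (0 : ℝ), x ^ α * weibullPDF α₀ lam x)
              + rstar * T ^ α)) :
    StrictAntiOn g (Set.Ioi (0 : ℝ))
      ∧ ∀ α₁ ∈ Set.Ioi (0 : ℝ), ∀ α₂ ∈ Set.Ioi (0 : ℝ),
          g α₁ = 0 → g α₂ = 0 → α₁ = α₂ := by
  have key : ∀ α₁ ∈ Set.Ioi (0:ℝ), ∀ α₂ ∈ Set.Ioi (0:ℝ), α₁ < α₂ → g α₂ < g α₁ := by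
    intro α₁ h₁ α₂ h₂ hlt
    have hα₁ : (0:ℝ) < α₁ := h₁
    have hα₂ : (0:ℝ) < α₂ := h₂
    rw [hg α₁ hα₁, hg α₂ hα₂]
    set I₁ := ∫ x in Set.Ioi (0:ℝ), x ^ α₁ * weibullPDF α₀ lam x with hI₁
    set I₂ := ∫ x in Set.Ioi (0:ℝ), x ^ α₂ * weibullPDF α₀ lam x with hI₂
    set J₁ := ∫ x in Set.Ioi (0:ℝ), x ^ α₁ * Real.log x * weibullPDF α₀ lam x with hJ₁
    set J₂ := ∫ x in Set.Ioi (0:ℝ), x ^ α₂ * Real.log x * weibullPDF α₀ lam x with hJ₂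
    have pI₁ : 0 < I₁ := wpos α₁ hα₀ hlam hα₁.le
    have pI₂ : 0 < I₂ := wpos α₂ hα₀ hlam hα₂.le
    have hD₁ : 0 < I₁ + rstar * T ^ α₁ :=
      add_pos_of_pos_of_nonneg pI₁ (mul_nonneg hr (Real.rpow_pos_of_pos hT α₁).le)
    have hD₂ : 0 < I₂ + rstar * T ^ α₂ :=
      add_pos_of_pos_of_nonneg pI₂ (mul_nonneg hr (Real.rpow_pos_of_pos hT α₂).le)
    have cheb : J₁ * I₂ ≤ J₂ * I₁ := wcheb hα₀ hlam hα₁ hα₂ hlt.le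
    have cross : 0 ≤ T ^ α₁ * J₂ - T ^ α₂ * J₁
        - Real.log T * T ^ α₁ * I₂ + Real.log T * T ^ α₂ * I₁ :=
      wcross hα₀ hlam hα₁ hα₂ hT hlt.le
    have hrc := mul_nonneg hr cross
    have expand : (J₂ + rstar * T ^ α₂ * Real.log T) * (I₁ + rstar * T ^ α₁)
        - (J₁ + rstar * T ^ α₁ * Real.log T) * (I₂ + rstar * T ^ α₂)
      = (J₂ * I₁ - J₁ * I₂)
        + rstar * (T ^ α₁ * J₂ - T ^ α₂ * J₁
            - Real.log T * T ^ α₁ * I₂ + Real.log T * T ^ α₂ * I₁) := by ring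
    have hmain : (J₁ + rstar * T ^ α₁ * Real.log T) * (I₂ + rstar * T ^ α₂)
        ≤ (J₂ + rstar * T ^ α₂ * Real.log T) * (I₁ + rstar * T ^ α₁) := by linarith
    have hdiv : (J₁ + rstar * T ^ α₁ * Real.log T) / (I₁ + rstar * T ^ α₁)
        ≤ (J₂ + rstar * T ^ α₂ * Real.log T) / (I₂ + rstar * T ^ α₂) :=
      (div_le_div_iff₀ hD₁ hD₂).2 hmain
    have h1α : 1 / α₂ < 1 / α₁ := one_div_lt_one_div_of_lt hα₁ hlt
    linarith
  refine ⟨fun α₁ h₁ α₂ h₂ h => key α₁ h₁ α₂ h₂ h, ?_⟩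
  intro α₁ h₁ α₂ h₂ e₁ e₂
  by_contra hne
  rcases Ne.lt_or_gt hne with hlt | hlt
  · have := key α₁ h₁ α₂ h₂ hlt
    rw [e₁, e₂] at this
    exact lt_irrefl 0 this
  · have := key α₂ h₂ α₁ h₁ hlt
    rw [e₁, e₂] at this
    exact lt_irrefl 0 this
end

section
/- Let m ≥ 1, let x₁, …, x_m be positive real numbers, and let R₁, …, R_m be nonnegative reals. Define the estimating function f(α) = m/α + Σᵢ log xᵢ − m · ( Σᵢ (1+Rᵢ) xᵢ^{α} log xᵢ ) / ( Σᵢ (1+Rᵢ) xᵢ^{α} ) for α > 0. Then f is strictly decreasing on (0,∞). -/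
open Finset Real

/-- The profiled ML score for the Weibull shape parameter under PHC/APHC Case 1,
`f(α) = m/α + Σ log xᵢ - m (Σ (1+Rᵢ) xᵢ^α log xᵢ)/(Σ (1+Rᵢ) xᵢ^α)`, is strictly
decreasing on `(0,∞)`. -/
theorem phc_case1_score_strict_anti
    (m : ℕ) (hm : 1 ≤ m) (x R : Fin m → ℝ)
    (hx : ∀ i, 0 < x i) (hR : ∀ i, 0 ≤ R i)
    (f : ℝ → ℝ)
    (hf : ∀ α, 0 < α → f α =
      m / α + (∑ i, Real.log (x i))
        - m * ((∑ i, (1 + R i) * x i ^ α * Real.log (x i))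
            / (∑ i, (1 + R i) * x i ^ α))) :
    StrictAntiOn f (Set.Ioi (0 : ℝ)) := by
  intro α hα β hβ hαβ
  simp only [Set.mem_Ioi] at hα hβ
  rw [hf α hα, hf β hβ]
  have hw : ∀ i, (0:ℝ) < 1 + R i := fun i => by linarith [hR i]
  have hne : (Finset.univ : Finset (Fin m)).Nonempty :=
    ⟨⟨0, hm⟩, Finset.mem_univ _⟩
  have hSpos : ∀ t : ℝ, 0 < ∑ i, (1 + R i) * x i ^ t := fun t =>
    Finset.sum_pos (fun i _ => mul_pos (hw i) (Real.rpow_pos_of_pos (hx i) t)) hne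
  -- factorization x^β = x^α * x^(β-α)
  have hb : ∀ i, x i ^ β = x i ^ α * x i ^ (β - α) := fun i => by
    rw [← Real.rpow_add (hx i)]; ring_nf
  -- key Chebyshev-type inequality
  have key : (∑ i, (1 + R i) * x i ^ α * Real.log (x i)) * (∑ i, (1 + R i) * x i ^ β)
      ≤ (∑ i, (1 + R i) * x i ^ β * Real.log (x i)) * (∑ i, (1 + R i) * x i ^ α) := by
    have e1 : (∑ i, (1 + R i) * x i ^ β * Real.log (x i)) * (∑ i, (1 + R i) * x i ^ α)
        - (∑ i, (1 + R i) * x i ^ α * Real.log (x i)) * (∑ i, (1 + R i) * x i ^ β)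
        = ∑ i, ∑ j, ((1 + R i) * (1 + R j) *
            (x i ^ β * x j ^ α - x i ^ α * x j ^ β) * Real.log (x i)) := by
      rw [Finset.sum_mul_sum, Finset.sum_mul_sum, ← Finset.sum_sub_distrib]
      refine Finset.sum_congr rfl fun i _ => ?_
      rw [← Finset.sum_sub_distrib]
      refine Finset.sum_congr rfl fun j _ => ?_
      ring
    have e2 : ∑ i, ∑ j, ((1 + R i) * (1 + R j) *
            (x i ^ β * x j ^ α - x i ^ α * x j ^ β) * Real.log (x i))
        = ∑ i, ∑ j, ((1 + R j) * (1 + R i) *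
            (x j ^ β * x i ^ α - x j ^ α * x i ^ β) * Real.log (x j)) :=
      Finset.sum_comm
    have e3 : ∀ i j : Fin m, 0 ≤
        ((1 + R i) * (1 + R j) * (x i ^ β * x j ^ α - x i ^ α * x j ^ β) * Real.log (x i))
        + ((1 + R j) * (1 + R i) * (x j ^ β * x i ^ α - x j ^ α * x i ^ β) * Real.log (x j)) := by
      intro i j
      have hfac : ((1 + R i) * (1 + R j) * (x i ^ β * x j ^ α - x i ^ α * x j ^ β) * Real.log (x i))
          + ((1 + R j) * (1 + R i) * (x j ^ β * x i ^ α - x j ^ α * x i ^ β) * Real.log (x j))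
          = ((1 + R i) * (1 + R j)) * (x i ^ α * x j ^ α) *
            ((x i ^ (β - α) - x j ^ (β - α)) * (Real.log (x i) - Real.log (x j))) := by
        rw [hb i, hb j]; ring
      rw [hfac]
      have h1 : 0 ≤ (x i ^ (β - α) - x j ^ (β - α)) * (Real.log (x i) - Real.log (x j)) := by
        rcases le_total (x i) (x j) with h | h
        · have hu : x i ^ (β - α) ≤ x j ^ (β - α) :=
            Real.rpow_le_rpow (hx i).le h (by linarith)
          have hc : Real.log (x i) ≤ Real.log (x j) := Real.log_le_log (hx i) h
          nlinarith
        · have hu : x j ^ (β - α) ≤ x i ^ (β - α) :=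
            Real.rpow_le_rpow (hx j).le h (by linarith)
          have hc : Real.log (x j) ≤ Real.log (x i) := Real.log_le_log (hx j) h
          nlinarith
      have h2 : 0 ≤ (1 + R i) * (1 + R j) := (mul_pos (hw i) (hw j)).le
      have h3 : 0 ≤ x i ^ α * x j ^ α :=
        (mul_pos (Real.rpow_pos_of_pos (hx i) α) (Real.rpow_pos_of_pos (hx j) α)).le
      exact mul_nonneg (mul_nonneg h2 h3) h1
    have twice : 0 ≤ 2 * ((∑ i, (1 + R i) * x i ^ β * Real.log (x i)) * (∑ i, (1 + R i) * x i ^ α)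
        - (∑ i, (1 + R i) * x i ^ α * Real.log (x i)) * (∑ i, (1 + R i) * x i ^ β)) := by
      rw [e1, two_mul]
      nth_rewrite 2 [e2]
      rw [← Finset.sum_add_distrib]
      refine Finset.sum_nonneg fun i _ => ?_
      rw [← Finset.sum_add_distrib]
      exact Finset.sum_nonneg fun j _ => e3 i j
    linarith
  have hm' : (0:ℝ) < m := by exact_mod_cast hm
  have hdiv : (∑ i, (1 + R i) * x i ^ α * Real.log (x i)) / (∑ i, (1 + R i) * x i ^ α)
      ≤ (∑ i, (1 + R i) * x i ^ β * Real.log (x i)) / (∑ i, (1 + R i) * x i ^ β) :=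
    (div_le_div_iff₀ (hSpos α) (hSpos β)).mpr key
  have h1 : (m:ℝ)/β < m/α := by
    apply div_lt_div_of_pos_left hm' hα hαβ
  have h2 := mul_le_mul_of_nonneg_left hdiv hm'.le
  linarith
end

section
/- Let m ≥ 2, let x₁, …, x_m be positive real numbers that are not all equal, and let R₁, …, R_m be nonnegative reals. Define f(α) = m/α + Σᵢ log xᵢ − m · ( Σᵢ (1+Rᵢ) xᵢ^{α} log xᵢ ) / ( Σᵢ (1+Rᵢ) xᵢ^{α} ) for α > 0. Then f(α) → +∞ as α → 0⁺, f(α) converges to a strictly negative limit as α → ∞, and f has exactly one root in (0,∞). -/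
open Finset Real Filter Topology

variable {m : ℕ}

noncomputable def Fsum (w t : Fin m → ℝ) (α : ℝ) : ℝ := ∑ i, w i * Real.exp (t i * α)
noncomputable def Gsum (w t : Fin m → ℝ) (α : ℝ) : ℝ := ∑ i, w i * t i * Real.exp (t i * α)
noncomputable def Hsum (w t : Fin m → ℝ) (α : ℝ) : ℝ := ∑ i, w i * t i ^ 2 * Real.exp (t i * α)

lemma Fsum_pos (w t : Fin m → ℝ) (hw : ∀ i, 0 < w i) (hm : 0 < m) (α : ℝ) :
    0 < Fsum w t α := by
  apply Finset.sum_pos (fun i _ => mul_pos (hw i) (Real.exp_pos _))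
  haveI := Fin.pos_iff_nonempty.mp hm
  exact Finset.univ_nonempty

lemma hasDerivAt_Fsum (w t : Fin m → ℝ) (α : ℝ) :
    HasDerivAt (Fsum w t) (Gsum w t α) α := by
  unfold Fsum Gsum
  have : HasDerivAt (fun a => ∑ i, w i * Real.exp (t i * a))
      (∑ i, w i * t i * Real.exp (t i * α)) α := by
    apply HasDerivAt.fun_sum
    intro i _
    have h1 : HasDerivAt (fun a : ℝ => t i * a) (t i) α := by
      simpa using (hasDerivAt_id α).const_mul (t i)
    have h2 := (Real.hasDerivAt_exp (t i * α)).comp α h1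
    have h3 := h2.const_mul (w i)
    exact h3.congr_deriv (by ring)
  exact this

lemma hasDerivAt_Gsum (w t : Fin m → ℝ) (α : ℝ) :
    HasDerivAt (Gsum w t) (Hsum w t α) α := by
  have h := hasDerivAt_Fsum (fun i => w i * t i) t α
  have e : Gsum (fun i => w i * t i) t α = Hsum w t α := by
    unfold Gsum Hsum; exact Finset.sum_congr rfl fun i _ => by ring
  rw [← e]
  exact h

lemma sq_Gsum_le (w t : Fin m → ℝ) (hw : ∀ i, 0 ≤ w i) (α : ℝ) :
    (Gsum w t α) ^ 2 ≤ Hsum w t α * Fsum w t α := by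
  unfold Fsum Gsum Hsum
  apply Finset.sum_sq_le_sum_mul_sum_of_sq_eq_mul
  · intro i _; exact mul_nonneg (mul_nonneg (hw i) (sq_nonneg _)) (Real.exp_pos _).le
  · intro i _; exact mul_nonneg (hw i) (Real.exp_pos _).le
  · intro i _; ring

lemma monotone_ratio (w t : Fin m → ℝ) (hw : ∀ i, 0 < w i) (hm : 0 < m) :
    Monotone (fun α => Gsum w t α / Fsum w t α) := by
  have hF : ∀ α, Fsum w t α ≠ 0 := fun α => (Fsum_pos w t hw hm α).ne'
  have hd : ∀ α : ℝ, HasDerivAt (fun α => Gsum w t α / Fsum w t α)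
      ((Hsum w t α * Fsum w t α - Gsum w t α * Gsum w t α) / (Fsum w t α) ^ 2) α :=
    fun α => (hasDerivAt_Gsum w t α).div (hasDerivAt_Fsum w t α) (hF α)
  apply monotone_of_deriv_nonneg (fun α => (hd α).differentiableAt)
  intro α
  rw [(hd α).deriv]
  apply div_nonneg _ (sq_nonneg _)
  have h := sq_Gsum_le w t (fun i => (hw i).le) α
  nlinarith

lemma continuous_ratio (w t : Fin m → ℝ) (hw : ∀ i, 0 < w i) (hm : 0 < m) :
    Continuous (fun α => Gsum w t α / Fsum w t α) := by
  have hF : Continuous (Fsum w t) :=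
    continuous_iff_continuousAt.mpr fun α => (hasDerivAt_Fsum w t α).continuousAt
  have hG : Continuous (Gsum w t) :=
    continuous_iff_continuousAt.mpr fun α => (hasDerivAt_Gsum w t α).continuousAt
  exact hG.div hF (fun α => (Fsum_pos w t hw hm α).ne')

lemma tendsto_ratio_atTop (w t : Fin m → ℝ) (hw : ∀ i, 0 < w i) (hm : 0 < m) :
    Tendsto (fun α => Gsum w t α / Fsum w t α) atTop
      (𝓝 (Finset.univ.sup' (by haveI := Fin.pos_iff_nonempty.mp hm; exact Finset.univ_nonempty) t)) := by
  haveI := Fin.pos_iff_nonempty.mp hm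
  have hne : (Finset.univ : Finset (Fin m)).Nonempty := Finset.univ_nonempty
  set T := Finset.univ.sup' hne t with hT
  set F1 : ℝ → ℝ := fun α => ∑ i, w i * Real.exp ((t i - T) * α) with hF1
  set G1 : ℝ → ℝ := fun α => ∑ i, w i * t i * Real.exp ((t i - T) * α) with hG1
  set D : ℝ := ∑ i, (if t i = T then w i else 0) with hD
  have hDpos : 0 < D := by
    obtain ⟨i₀, _, hi₀⟩ := Finset.exists_mem_eq_sup' hne t
    have : (if t i₀ = T then w i₀ else 0) ≤ D := by
      apply Finset.single_le_sum (f := fun i => if t i = T then w i else 0)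
        (fun i _ => by split_ifs; exacts [(hw i).le, le_refl 0]) (Finset.mem_univ i₀)
    rw [if_pos hi₀.symm] at this
    exact lt_of_lt_of_le (hw i₀) this
  have hkey : ∀ α : ℝ, Gsum w t α / Fsum w t α = G1 α / F1 α := by
    intro α
    have hG : Gsum w t α = Real.exp (T * α) * G1 α := by
      rw [hG1]; unfold Gsum
      rw [Finset.mul_sum]
      apply Finset.sum_congr rfl; intro i _
      rw [show t i * α = T * α + (t i - T) * α by ring, Real.exp_add]; ring
    have hF : Fsum w t α = Real.exp (T * α) * F1 α := by
      rw [hF1]; unfold Fsum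
      rw [Finset.mul_sum]
      apply Finset.sum_congr rfl; intro i _
      rw [show t i * α = T * α + (t i - T) * α by ring, Real.exp_add]; ring
    rw [hG, hF, mul_div_mul_left _ _ (Real.exp_ne_zero _)]
  have hterm : ∀ (c : Fin m → ℝ) (i : Fin m), Tendsto (fun α => c i * Real.exp ((t i - T) * α))
      atTop (𝓝 (if t i = T then c i else 0)) := by
    intro c i
    rcases eq_or_ne (t i) T with h | h
    · simp only [h, if_pos rfl, sub_self, zero_mul, Real.exp_zero, mul_one]
      exact tendsto_const_nhds
    · rw [if_neg h]
      have hlt : t i - T < 0 := by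
        have := Finset.le_sup' t (Finset.mem_univ i)
        rw [← hT] at this
        cases this.lt_or_eq with
        | inl h' => linarith
        | inr h' => exact absurd h' h
      have h1 : Tendsto (fun α : ℝ => (t i - T) * α) atTop atBot :=
        tendsto_id.const_mul_atTop_of_neg hlt
      have h2 := Real.tendsto_exp_atBot.comp h1
      simpa using h2.const_mul (c i)
  have hFt : Tendsto F1 atTop (𝓝 D) := by
    rw [hF1, hD]
    exact tendsto_finset_sum _ (fun i _ => hterm w i)
  have hGt : Tendsto G1 atTop (𝓝 (T * D)) := by
    have : T * D = ∑ i, (if t i = T then w i * t i else 0) := by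
      rw [hD, Finset.mul_sum]
      apply Finset.sum_congr rfl; intro i _
      split_ifs with h
      · rw [h]; ring
      · ring
    rw [hG1, this]
    apply tendsto_finset_sum _ (fun i _ => ?_)
    have := hterm (fun i => w i * t i) i
    simpa using this
  have := hGt.div hFt hDpos.ne'
  rw [mul_div_assoc, div_self hDpos.ne', mul_one] at this
  exact (tendsto_congr hkey).mpr this

/-- For the profiled Weibull ML score under PHC Case 1 with `m ≥ 2` not-all-equal
positive observations, `f(α) → +∞` as `α → 0⁺`, `f(α)` converges to a strictly
negative limit as `α → ∞`, and `f` has exactly one root in `(0,∞)`. -/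
theorem phc_case1_score_unique_root
    (m : ℕ) (hm : 2 ≤ m) (x R : Fin m → ℝ)
    (hx : ∀ i, 0 < x i) (hne : ¬ ∀ i j, x i = x j) (hR : ∀ i, 0 ≤ R i)
    (f : ℝ → ℝ)
    (hf : ∀ α, 0 < α → f α =
      m / α + (∑ i, Real.log (x i))
        - m * ((∑ i, (1 + R i) * x i ^ α * Real.log (x i))
            / (∑ i, (1 + R i) * x i ^ α))) :
    Tendsto f (nhdsWithin 0 (Set.Ioi 0)) atTop
      ∧ (∃ L : ℝ, L < 0 ∧ Tendsto f atTop (nhds L))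
      ∧ (∃! α : ℝ, α ∈ Set.Ioi (0 : ℝ) ∧ f α = 0) := by
  have hm0 : 0 < m := by omega
  have hmr : (0 : ℝ) < m := by exact_mod_cast hm0
  set w : Fin m → ℝ := fun i => 1 + R i with hwdef
  set t : Fin m → ℝ := fun i => Real.log (x i) with htdef
  have hw : ∀ i, 0 < w i := fun i => by have := hR i; simp only [hwdef]; linarith
  haveI : Nonempty (Fin m) := Fin.pos_iff_nonempty.mp hm0
  have hneF : (Finset.univ : Finset (Fin m)).Nonempty := Finset.univ_nonempty
  set g : ℝ → ℝ := fun α => Gsum w t α / Fsum w t α with hgdef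
  set C : ℝ := ∑ i, t i with hCdef
  -- bridge
  have hfe : ∀ α : ℝ, 0 < α → f α = m / α + C - m * g α := by
    intro α hα
    rw [hf α hα]
    have e1 : (∑ i, (1 + R i) * x i ^ α) = Fsum w t α := by
      unfold Fsum
      apply Finset.sum_congr rfl; intro i _
      rw [Real.rpow_def_of_pos (hx i)]
    have e2 : (∑ i, (1 + R i) * x i ^ α * Real.log (x i)) = Gsum w t α := by
      unfold Gsum
      apply Finset.sum_congr rfl; intro i _
      rw [Real.rpow_def_of_pos (hx i)]; ring
    rw [e1, e2]
  set T : ℝ := Finset.univ.sup' hneF t with hTdef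
  have htle : ∀ i, t i ≤ T := fun i => Finset.le_sup' t (Finset.mem_univ i)
  -- some index with t strictly below T
  have hlt : ∃ k, t k < T := by
    push_neg at hne
    obtain ⟨i, j, hij⟩ := hne
    have htij : t i ≠ t j := by
      intro h
      apply hij
      have := congrArg Real.exp h
      rwa [Real.exp_log (hx i), Real.exp_log (hx j)] at this
    rcases lt_or_ge (t i) T with h | h
    · exact ⟨i, h⟩
    · refine ⟨j, ?_⟩
      have hiT : t i = T := le_antisymm (htle i) h
      cases (htle j).lt_or_eq with
      | inl h' => exact h'
      | inr h' => exact absurd (hiT.trans h'.symm) htij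
  have hCT : C < m * T := by
    obtain ⟨k, hk⟩ := hlt
    have : C < ∑ _i : Fin m, T :=
      Finset.sum_lt_sum (fun i _ => htle i) ⟨k, Finset.mem_univ k, hk⟩
    simpa [Finset.sum_const, Finset.card_univ, nsmul_eq_mul] using this
  -- Part 2 limit
  have hgT : Tendsto g atTop (𝓝 T) := tendsto_ratio_atTop w t hw hm0
  have hinv0 : Tendsto (fun α : ℝ => (m : ℝ) / α) atTop (𝓝 0) := by
    simpa [div_eq_mul_inv] using (tendsto_inv_atTop_zero (𝕜 := ℝ)).const_mul (m : ℝ)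
  have hexprTop : Tendsto (fun α => (m : ℝ) / α + C - m * g α) atTop (𝓝 (0 + C - m * T)) :=
    ((hinv0.add tendsto_const_nhds).sub (hgT.const_mul (m : ℝ)))
  have part2 : Tendsto f atTop (𝓝 (C - m * T)) := by
    have : (0 : ℝ) + C - m * T = C - m * T := by ring
    rw [this] at hexprTop
    apply hexprTop.congr'
    filter_upwards [eventually_gt_atTop (0 : ℝ)] with α hα
    exact (hfe α hα).symm
  -- Part 1
  have hgc : Continuous g := continuous_ratio w t hw hm0
  have part1 : Tendsto f (nhdsWithin 0 (Set.Ioi 0)) atTop := by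
    have h1 : Tendsto (fun α : ℝ => (m : ℝ) / α) (𝓝[>] 0) atTop := by
      simp only [div_eq_mul_inv]
      exact tendsto_inv_nhdsGT_zero.const_mul_atTop hmr
    have h2 : Tendsto (fun α : ℝ => C - m * g α) (𝓝[>] 0) (𝓝 (C - m * g 0)) := by
      apply Tendsto.mono_left _ nhdsWithin_le_nhds
      exact (tendsto_const_nhds.sub ((hgc.tendsto 0).const_mul (m : ℝ)))
    have h3 : Tendsto (fun α : ℝ => (m : ℝ) / α + (C - m * g α)) (𝓝[>] 0) atTop :=
      h1.atTop_add h2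
    apply h3.congr'
    filter_upwards [self_mem_nhdsWithin] with α hα
    rw [hfe α hα]; ring
  -- strict anti
  have hgm : Monotone g := monotone_ratio w t hw hm0
  have hanti : StrictAntiOn f (Set.Ioi 0) := by
    intro a ha b hb hab
    rw [hfe a ha, hfe b hb]
    have h1 : (m : ℝ) / b < m / a := div_lt_div_of_pos_left hmr ha hab
    have h2 : (m : ℝ) * g a ≤ m * g b := mul_le_mul_of_nonneg_left (hgm hab.le) hmr.le
    linarith
  -- existence of root
  have hfexpr_cont : ContinuousOn f (Set.Ioi 0) := by
    have : ContinuousOn (fun α => (m : ℝ) / α + C - m * g α) (Set.Ioi 0) := by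
      apply ContinuousOn.sub
      · exact (continuousOn_const.div continuousOn_id
          (fun α hα => ne_of_gt hα)).add continuousOn_const
      · exact (continuous_const.mul hgc).continuousOn
    exact this.congr fun α hα => hfe α hα
  obtain ⟨a, hfa, ha⟩ : ∃ a, 0 < f a ∧ a ∈ Set.Ioi (0 : ℝ) :=
    ((part1.eventually_gt_atTop 0).and self_mem_nhdsWithin).exists
  obtain ⟨b, hfb, hab⟩ : ∃ b, f b < 0 ∧ a < b :=
    ((part2.eventually_lt_const (by linarith [hCT] : C - m * T < 0)).and
      (eventually_gt_atTop a)).exists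
  have hIcc : Set.Icc a b ⊆ Set.Ioi 0 := fun y hy => lt_of_lt_of_le ha hy.1
  have hcont : ContinuousOn f (Set.Icc a b) := hfexpr_cont.mono hIcc
  have hiv := intermediate_value_Icc' hab.le hcont
  have h0mem : (0 : ℝ) ∈ Set.Icc (f b) (f a) := ⟨hfb.le, hfa.le⟩
  obtain ⟨c, hcmem, hfc⟩ := hiv h0mem
  have hcIoi : c ∈ Set.Ioi (0 : ℝ) := hIcc hcmem
  refine ⟨part1, ⟨C - m * T, by linarith, part2⟩, c, ⟨hcIoi, hfc⟩, ?_⟩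
  intro y hy
  exact hanti.injOn hy.1 hcIoi (hy.2.trans hfc.symm)
end

section
/- Let j ≥ 1, let T > 0, let x₁, …, x_j be real numbers with 0 < xᵢ < T for all i and not all xᵢ equal to one another (or j ≥ 1 with at least the censoring atom present), let R₁, …, R_j be nonnegative reals, and let R* ≥ 1. Define f(α) = j/α + Σᵢ log xᵢ − j · ( Σᵢ (1+Rᵢ) xᵢ^{α} log xᵢ + R* T^{α} log T ) / ( Σᵢ (1+Rᵢ) xᵢ^{α} + R* T^{α} ) for α > 0. Then f is strictly decreasing on (0,∞), f(α) → +∞ as α → 0⁺, f(α) converges to the strictly negative limit Σᵢ log(xᵢ/T) as α → ∞, and consequently f has exactly one root in (0,∞). -/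
open Finset Real Filter

lemma cheb_aux {ι : Type*} (s : Finset ι) (w l : ι → ℝ) (hw : ∀ i ∈ s, 0 ≤ w i)
    {α β : ℝ} (hab : α ≤ β) :
    (∑ i ∈ s, w i * Real.exp (l i * α) * l i) * (∑ i ∈ s, w i * Real.exp (l i * β)) ≤
    (∑ i ∈ s, w i * Real.exp (l i * β) * l i) * (∑ i ∈ s, w i * Real.exp (l i * α)) := by
  set A : ι → ℝ := fun i => w i * Real.exp (l i * β) * l i with hA
  set B : ι → ℝ := fun i => w i * Real.exp (l i * α) with hB
  set C : ι → ℝ := fun i => w i * Real.exp (l i * α) * l i with hC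
  set E : ι → ℝ := fun i => w i * Real.exp (l i * β) with hE
  have hD : ∀ k ∈ s, ∀ m ∈ s,
      0 ≤ (A k * B m - C k * E m) + (A m * B k - C m * E k) := by
    intro k hk m hm
    have hwk := hw k hk
    have hwm := hw m hm
    have key : 0 ≤ (l k - l m) *
        (Real.exp (l k * β + l m * α) - Real.exp (l k * α + l m * β)) := by
      rcases le_total (l m) (l k) with h | h
      · apply mul_nonneg (by linarith)
        have h2 : l k * α + l m * β ≤ l k * β + l m * α := by nlinarith
        linarith [Real.exp_le_exp.mpr h2]
      · apply mul_nonneg_of_nonpos_of_nonpos (by linarith)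
        have h2 : l k * β + l m * α ≤ l k * α + l m * β := by nlinarith
        linarith [Real.exp_le_exp.mpr h2]
    have expand : (A k * B m - C k * E m) + (A m * B k - C m * E k)
        = w k * w m * ((l k - l m) *
          (Real.exp (l k * β + l m * α) - Real.exp (l k * α + l m * β))) := by
      simp only [hA, hB, hC, hE, Real.exp_add]
      ring
    rw [expand]
    exact mul_nonneg (mul_nonneg hwk hwm) key
  have pos : 0 ≤ ∑ k ∈ s, ∑ m ∈ s, ((A k * B m - C k * E m) + (A m * B k - C m * E k)) :=
    Finset.sum_nonneg fun k hk => Finset.sum_nonneg fun m hm => hD k hk m hm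
  have swap : ∑ k ∈ s, ∑ m ∈ s, (A m * B k - C m * E k)
      = ∑ k ∈ s, ∑ m ∈ s, (A k * B m - C k * E m) := Finset.sum_comm
  have expand2 : ∑ k ∈ s, ∑ m ∈ s, ((A k * B m - C k * E m) + (A m * B k - C m * E k))
      = 2 * ((∑ i ∈ s, A i) * (∑ i ∈ s, B i) - (∑ i ∈ s, C i) * (∑ i ∈ s, E i)) := by
    simp only [Finset.sum_add_distrib, swap, Finset.sum_sub_distrib,
      ← Finset.mul_sum, ← Finset.sum_mul]
    ring
  nlinarith [pos, expand2]

/-- For the profiled Weibull ML score under PHC Case 2, with `j ≥ 1` failures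
`0 < xᵢ < T` before the termination time `T`, removals `Rᵢ ≥ 0`, and `R* ≥ 1`
units censored at `T`:
`f(α) = j/α + Σ log xᵢ - j (Σ (1+Rᵢ) xᵢ^α log xᵢ + R* T^α log T)/(Σ (1+Rᵢ) xᵢ^α + R* T^α)`
is strictly decreasing on `(0,∞)`, tends to `+∞` as `α → 0⁺`, converges to the
strictly negative limit `Σ log(xᵢ/T)` as `α → ∞`, and hence has exactly one root
in `(0,∞)`. -/
theorem phc_case2_score_unique_root
    (j : ℕ) (hj : 1 ≤ j) (T : ℝ) (hT : 0 < T)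
    (x R : Fin j → ℝ)
    (hx : ∀ i, 0 < x i) (hxT : ∀ i, x i < T) (hR : ∀ i, 0 ≤ R i)
    (Rstar : ℝ) (hRstar : 1 ≤ Rstar)
    (f : ℝ → ℝ)
    (hf : ∀ α, 0 < α → f α =
      j / α + (∑ i, Real.log (x i))
        - j * (((∑ i, (1 + R i) * x i ^ α * Real.log (x i))
                  + Rstar * T ^ α * Real.log T)
            / ((∑ i, (1 + R i) * x i ^ α) + Rstar * T ^ α))) :
    StrictAntiOn f (Set.Ioi (0 : ℝ))
      ∧ Tendsto f (nhdsWithin 0 (Set.Ioi 0)) atTop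
      ∧ ((∑ i, Real.log (x i / T)) < 0
          ∧ Tendsto f atTop (nhds (∑ i, Real.log (x i / T))))
      ∧ (∃! α : ℝ, α ∈ Set.Ioi (0 : ℝ) ∧ f α = 0) := by
  have hj0 : (0:ℝ) < j := by exact_mod_cast Nat.lt_of_lt_of_le Nat.zero_lt_one hj
  set p : Fin (j+1) → ℝ := Fin.snoc x T with hp
  set w : Fin (j+1) → ℝ := Fin.snoc (fun i => 1 + R i) Rstar with hw
  have hppos : ∀ i, 0 < p i := by
    intro i
    induction i using Fin.lastCases with
    | last => simpa [hp] using hT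
    | cast i => simpa [hp] using hx i
  have hwpos : ∀ i, 0 < w i := by
    intro i
    induction i using Fin.lastCases with
    | last => simp [hw]; linarith
    | cast i => simp [hw]; linarith [hR i]
  set l : Fin (j+1) → ℝ := fun i => Real.log (p i) with hl
  set S : ℝ → ℝ := fun α => ∑ i, w i * Real.exp (l i * α) with hS
  set N : ℝ → ℝ := fun α => ∑ i, w i * Real.exp (l i * α) * l i with hN
  set C : ℝ := ∑ i, Real.log (x i) with hC
  have hSpos : ∀ α, 0 < S α := fun α =>
    Finset.sum_pos (fun i _ => mul_pos (hwpos i) (Real.exp_pos _)) Finset.univ_nonempty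
  have hf' : ∀ α, 0 < α → f α = j / α + C - j * (N α / S α) := by
    intro α hα
    rw [hf α hα]
    have hden : (∑ i, (1 + R i) * x i ^ α) + Rstar * T ^ α = S α := by
      show _ = ∑ i : Fin (j+1), w i * Real.exp (l i * α)
      rw [Fin.sum_univ_castSucc]
      simp [hp, hw, hl, Fin.snoc_castSucc, Fin.snoc_last,
        Real.rpow_def_of_pos (hx _), Real.rpow_def_of_pos hT]
    have hnum : (∑ i, (1 + R i) * x i ^ α * Real.log (x i)) + Rstar * T ^ α * Real.log T
        = N α := by
      show _ = ∑ i : Fin (j+1), w i * Real.exp (l i * α) * l i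
      rw [Fin.sum_univ_castSucc]
      simp [hp, hw, hl, Fin.snoc_castSucc, Fin.snoc_last,
        Real.rpow_def_of_pos (hx _), Real.rpow_def_of_pos hT]
    rw [hden, hnum, hC]
  -- monotonicity of the ratio
  have hg : ∀ a b : ℝ, a ≤ b → N a / S a ≤ N b / S b := by
    intro a b hab
    rw [div_le_div_iff₀ (hSpos a) (hSpos b)]
    exact cheb_aux Finset.univ w l (fun i _ => (hwpos i).le) hab
  -- strict antitonicity
  have hanti : StrictAntiOn f (Set.Ioi (0:ℝ)) := by
    intro a ha b hb hab
    rw [Set.mem_Ioi] at ha hb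
    rw [hf' a ha, hf' b hb]
    have h1 : (j:ℝ)/b < j/a := div_lt_div_of_pos_left hj0 ha hab
    have h2 : (j:ℝ) * (N a / S a) ≤ j * (N b / S b) :=
      mul_le_mul_of_nonneg_left (hg a b hab.le) hj0.le
    linarith
  -- continuity
  have hScont : Continuous S := by
    apply continuous_finset_sum
    intro i _
    fun_prop
  have hNcont : Continuous N := by
    apply continuous_finset_sum
    intro i _
    fun_prop
  have hGcont : Continuous (fun α => N α / S α) :=
    hNcont.div hScont fun α => (hSpos α).ne'
  have hFcont : ContinuousOn f (Set.Ioi (0:ℝ)) := by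
    have hcont : ContinuousOn (fun α : ℝ => (j:ℝ) / α + C - j * (N α / S α))
        (Set.Ioi (0:ℝ)) := by
      apply ContinuousOn.sub
      · exact (continuousOn_const.div continuousOn_id fun α hα => ne_of_gt hα).add
          continuousOn_const
      · exact (continuous_const.mul hGcont).continuousOn
    exact hcont.congr fun α hα => hf' α hα
  -- limit as α → 0⁺
  have hlim0 : Tendsto f (nhdsWithin 0 (Set.Ioi 0)) atTop := by
    have h1 : Tendsto (fun α : ℝ => (j:ℝ) / α) (nhdsWithin 0 (Set.Ioi 0)) atTop := by
      simpa [div_eq_mul_inv] using tendsto_inv_nhdsGT_zero.const_mul_atTop hj0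
    have h2 : Tendsto (fun α : ℝ => C - j * (N α / S α)) (nhdsWithin 0 (Set.Ioi 0))
        (nhds (C - j * (N 0 / S 0))) :=
      ((continuous_const.sub (continuous_const.mul hGcont)).tendsto 0).mono_left
        nhdsWithin_le_nhds
    refine (h1.atTop_add h2).congr' ?_
    filter_upwards [self_mem_nhdsWithin] with α hα
    rw [hf' α hα]; ring
  -- limit as α → ∞
  set L : ℝ := Real.log T with hL
  have hlL : ∀ i : Fin j, l (Fin.castSucc i) < L := by
    intro i
    simp only [hl, hp, Fin.snoc_castSucc]
    exact Real.log_lt_log (hx i) (hxT i)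
  have hllast : l (Fin.last j) = L := by simp [hl, hp, hL]
  have hwlast : w (Fin.last j) = Rstar := by simp [hw]
  have hSe : ∀ α, S α * Real.exp (-(L * α)) = ∑ i, w i * Real.exp ((l i - L) * α) := by
    intro α
    rw [hS]
    simp only [Finset.sum_mul]
    refine Finset.sum_congr rfl fun i _ => ?_
    rw [mul_assoc, ← Real.exp_add, show l i * α + -(L * α) = (l i - L) * α by ring]
  have hNe : ∀ α, N α * Real.exp (-(L * α)) = ∑ i, w i * Real.exp ((l i - L) * α) * l i := by
    intro α
    rw [hN]
    simp only [Finset.sum_mul]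
    refine Finset.sum_congr rfl fun i _ => ?_
    rw [show w i * Real.exp (l i * α) * l i * Real.exp (-(L * α))
        = w i * (Real.exp (l i * α) * Real.exp (-(L * α))) * l i by ring,
      ← Real.exp_add, show l i * α + -(L * α) = (l i - L) * α by ring]
  have hterm0 : ∀ i : Fin j, Tendsto (fun α : ℝ => Real.exp ((l (Fin.castSucc i) - L) * α))
      atTop (nhds 0) := by
    intro i
    have hneg : l (Fin.castSucc i) - L < 0 := by linarith [hlL i]
    have h1 : Tendsto (fun α : ℝ => (l (Fin.castSucc i) - L) * α) atTop atBot :=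
      tendsto_id.const_mul_atTop_of_neg hneg
    exact Real.tendsto_exp_atBot.comp h1
  have hStilde : Tendsto (fun α => S α * Real.exp (-(L * α))) atTop (nhds Rstar) := by
    have : Tendsto (fun α : ℝ => ∑ i, w i * Real.exp ((l i - L) * α)) atTop (nhds Rstar) := by
      have hsum : Tendsto (fun α : ℝ => ∑ i, w i * Real.exp ((l i - L) * α)) atTop
          (nhds (∑ i : Fin (j+1), if i = Fin.last j then w i else 0)) := by
        apply tendsto_finset_sum
        intro i _
        induction i using Fin.lastCases with
        | last =>
          simp only [if_pos rfl, hllast, sub_self, zero_mul, Real.exp_zero, mul_one]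
          exact tendsto_const_nhds
        | cast i =>
          have hne : Fin.castSucc i ≠ Fin.last j := Fin.castSucc_lt_last i |>.ne
          simp only [if_neg hne]
          simpa using (hterm0 i).const_mul (w (Fin.castSucc i))
      have : (∑ i : Fin (j+1), if i = Fin.last j then w i else 0) = Rstar := by
        rw [Finset.sum_ite_eq' Finset.univ (Fin.last j) w]
        simp [hwlast]
      rw [this] at hsum
      exact hsum
    refine this.congr fun α => (hSe α).symm
  have hNtilde : Tendsto (fun α => N α * Real.exp (-(L * α))) atTop (nhds (Rstar * L)) := by
    have : Tendsto (fun α : ℝ => ∑ i, w i * Real.exp ((l i - L) * α) * l i) atTop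
        (nhds (Rstar * L)) := by
      have hsum : Tendsto (fun α : ℝ => ∑ i, w i * Real.exp ((l i - L) * α) * l i) atTop
          (nhds (∑ i : Fin (j+1), if i = Fin.last j then w i * l i else 0)) := by
        apply tendsto_finset_sum
        intro i _
        induction i using Fin.lastCases with
        | last =>
          simp only [if_pos rfl, hllast, sub_self, zero_mul, Real.exp_zero, mul_one]
          exact tendsto_const_nhds
        | cast i =>
          have hne : Fin.castSucc i ≠ Fin.last j := Fin.castSucc_lt_last i |>.ne
          simp only [if_neg hne]
          have := ((hterm0 i).const_mul (w (Fin.castSucc i))).mul_const (l (Fin.castSucc i))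
          simpa using this
      have : (∑ i : Fin (j+1), if i = Fin.last j then w i * l i else 0) = Rstar * L := by
        rw [Finset.sum_ite_eq' Finset.univ (Fin.last j) (fun i => w i * l i)]
        simp [hwlast, hllast]
      rw [this] at hsum
      exact hsum
    refine this.congr fun α => (hNe α).symm
  have hRstar0 : Rstar ≠ 0 := by linarith
  have hGlim : Tendsto (fun α => N α / S α) atTop (nhds L) := by
    have h := hNtilde.div hStilde hRstar0
    have heq : ∀ α, N α * Real.exp (-(L * α)) / (S α * Real.exp (-(L * α))) = N α / S α :=
      fun α => mul_div_mul_right _ _ (Real.exp_ne_zero _)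
    have h2 : Tendsto (fun α => N α / S α) atTop (nhds (Rstar * L / Rstar)) :=
      h.congr heq
    rwa [mul_comm, mul_div_assoc, div_self hRstar0, mul_one] at h2
  have hsumlog : (∑ i, Real.log (x i / T)) = C - j * L := by
    have : ∀ i : Fin j, Real.log (x i / T) = Real.log (x i) - L :=
      fun i => Real.log_div (hx i).ne' hT.ne'
    rw [Finset.sum_congr rfl fun i _ => this i, Finset.sum_sub_distrib, Finset.sum_const,
      Finset.card_univ, Fintype.card_fin, hC]
    ring
  have hliminf : Tendsto f atTop (nhds (∑ i, Real.log (x i / T))) := by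
    have h0 : Tendsto (fun α : ℝ => (j:ℝ) / α) atTop (nhds 0) := by
      simpa [div_eq_mul_inv] using tendsto_inv_atTop_zero.const_mul (j:ℝ)
    have hcomb : Tendsto (fun α : ℝ => (j:ℝ) / α + C - j * (N α / S α)) atTop
        (nhds (0 + C - j * L)) :=
      (h0.add tendsto_const_nhds).sub (hGlim.const_mul _)
    have heq : (0:ℝ) + C - j * L = ∑ i, Real.log (x i / T) := by
      rw [hsumlog]; ring
    rw [heq] at hcomb
    refine hcomb.congr' ?_
    filter_upwards [eventually_gt_atTop (0:ℝ)] with α hα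
    rw [hf' α hα]
  have hneg : (∑ i, Real.log (x i / T)) < 0 := by
    have hlt : ∀ i ∈ Finset.univ, Real.log (x i / T) < 0 := fun i _ =>
      Real.log_neg (div_pos (hx i) hT) ((div_lt_one hT).mpr (hxT i))
    have hne : (Finset.univ : Finset (Fin j)).Nonempty :=
      ⟨⟨0, Nat.lt_of_lt_of_le Nat.zero_lt_one hj⟩, Finset.mem_univ _⟩
    calc (∑ i, Real.log (x i / T)) < ∑ _i : Fin j, (0:ℝ) :=
          Finset.sum_lt_sum_of_nonempty hne hlt
      _ = 0 := by simp
  -- unique root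
  have hroot : ∃! α : ℝ, α ∈ Set.Ioi (0:ℝ) ∧ f α = 0 := by
    obtain ⟨a, ha0, hfa⟩ : ∃ a : ℝ, a ∈ Set.Ioi (0:ℝ) ∧ 0 < f a := by
      have h := (hlim0.eventually_gt_atTop 0).and self_mem_nhdsWithin
      obtain ⟨a, ha⟩ := h.exists
      exact ⟨a, ha.2, ha.1⟩
    obtain ⟨b, hab, hfb⟩ : ∃ b : ℝ, a < b ∧ f b < 0 := by
      have h1 : ∀ᶠ α in atTop, f α < 0 := hliminf.eventually_lt_const hneg
      obtain ⟨b, hb⟩ := (h1.and (eventually_gt_atTop a)).exists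
      exact ⟨b, hb.2, hb.1⟩
    rw [Set.mem_Ioi] at ha0
    have hsub : Set.Icc a b ⊆ Set.Ioi (0:ℝ) := fun t ht => lt_of_lt_of_le ha0 ht.1
    obtain ⟨c, hc, hfc⟩ := intermediate_value_Icc' hab.le (hFcont.mono hsub)
      (⟨hfb.le, hfa.le⟩ : (0:ℝ) ∈ Set.Icc (f b) (f a))
    refine ⟨c, ⟨hsub hc, hfc⟩, ?_⟩
    intro y hy
    exact hanti.injOn hy.1 (hsub hc) (hy.2.trans hfc.symm)
  exact ⟨hanti, hlim0, ⟨hneg, hliminf⟩, hroot⟩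
end

section
/- Let m ≥ 2 and 0 ≤ j ≤ m, let x₁, …, x_m be positive real numbers that are not all equal with x_m = maxᵢ xᵢ, let R₁, …, R_j be nonnegative reals, and let S ≥ 0 (representing n − m − Σᵢ₌₁ʲ Rᵢ). Define f(α) = m/α + Σᵢ₌₁ᵐ log xᵢ − m · ( Σᵢ₌₁ᵐ xᵢ^{α} log xᵢ + Σᵢ₌₁ʲ Rᵢ xᵢ^{α} log xᵢ + S · x_m^{α} log x_m ) / ( Σᵢ₌₁ᵐ xᵢ^{α} + Σᵢ₌₁ʲ Rᵢ xᵢ^{α} + S · x_m^{α} ) for α > 0. Then f is strictly decreasing on (0,∞), f(α) → +∞ as α → 0⁺, f(α) converges to a strictly negative limit as α → ∞, and f has exactly one root in (0,∞). -/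
open Finset Real Filter Topology

private lemma term_nonneg_aux {p q a b : ℝ} (hp : 0 < p) (hq : 0 < q) (hqp : q ≤ p)
    (hab : a ≤ b) :
    0 ≤ (Real.log p - Real.log q) * (p ^ b * q ^ a - p ^ a * q ^ b) := by
  apply mul_nonneg (sub_nonneg.2 (Real.log_le_log hq hqp))
  have h1 : q ^ (b - a) ≤ p ^ (b - a) := Real.rpow_le_rpow hq.le hqp (by linarith)
  have hb1 : p ^ b = p ^ a * p ^ (b - a) := by
    rw [← Real.rpow_add hp]; ring_nf
  have hb2 : q ^ b = q ^ a * q ^ (b - a) := by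
    rw [← Real.rpow_add hq]; ring_nf
  have hpa := Real.rpow_pos_of_pos hp a
  have hqa := Real.rpow_pos_of_pos hq a
  rw [hb1, hb2]
  nlinarith [mul_nonneg (mul_nonneg hpa.le hqa.le) (sub_nonneg.2 h1)]

private lemma term_nonneg {p q a b : ℝ} (hp : 0 < p) (hq : 0 < q) (hab : a ≤ b) :
    0 ≤ (Real.log p - Real.log q) * (p ^ b * q ^ a - p ^ a * q ^ b) := by
  rcases le_total q p with h | h
  · exact term_nonneg_aux hp hq h hab
  · have := term_nonneg_aux hq hp h hab
    convert this using 1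
    ring

private lemma ratio_mono {m : ℕ} (x c : Fin m → ℝ) (hx : ∀ i, 0 < x i)
    (hc : ∀ i, 0 ≤ c i) {a b : ℝ} (hab : a ≤ b) :
    (∑ i, c i * x i ^ a * Real.log (x i)) * (∑ i, c i * x i ^ b)
      ≤ (∑ i, c i * x i ^ b * Real.log (x i)) * (∑ i, c i * x i ^ a) := by
  have key : 0 ≤ ∑ i : Fin m, ∑ k : Fin m, (c i * c k) *
      ((Real.log (x i) - Real.log (x k)) * (x i ^ b * x k ^ a - x i ^ a * x k ^ b)) :=
    Finset.sum_nonneg fun i _ => Finset.sum_nonneg fun k _ =>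
      mul_nonneg (mul_nonneg (hc i) (hc k)) (term_nonneg (hx i) (hx k) hab)
  have hP : (∑ i : Fin m, ∑ k : Fin m,
        (c i * c k) * (Real.log (x i) * (x i ^ b * x k ^ a - x i ^ a * x k ^ b)))
      = (∑ i, c i * x i ^ b * Real.log (x i)) * (∑ i, c i * x i ^ a)
        - (∑ i, c i * x i ^ a * Real.log (x i)) * (∑ i, c i * x i ^ b) := by
    rw [Finset.sum_mul_sum, Finset.sum_mul_sum, ← Finset.sum_sub_distrib]
    refine Finset.sum_congr rfl fun i _ => ?_
    rw [← Finset.sum_sub_distrib]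
    exact Finset.sum_congr rfl fun k _ => by ring
  have hswap : (∑ i : Fin m, ∑ k : Fin m,
        (c i * c k) * (Real.log (x i) * (x i ^ b * x k ^ a - x i ^ a * x k ^ b)))
      = ∑ i : Fin m, ∑ k : Fin m,
        (c k * c i) * (Real.log (x k) * (x k ^ b * x i ^ a - x k ^ a * x i ^ b)) :=
    Finset.sum_comm
  have hcomb : (∑ i : Fin m, ∑ k : Fin m, (c i * c k) *
        ((Real.log (x i) - Real.log (x k)) * (x i ^ b * x k ^ a - x i ^ a * x k ^ b)))
      = (∑ i : Fin m, ∑ k : Fin m,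
          (c i * c k) * (Real.log (x i) * (x i ^ b * x k ^ a - x i ^ a * x k ^ b)))
        + (∑ i : Fin m, ∑ k : Fin m,
          (c k * c i) * (Real.log (x k) * (x k ^ b * x i ^ a - x k ^ a * x i ^ b))) := by
    rw [← Finset.sum_add_distrib]
    refine Finset.sum_congr rfl fun i _ => ?_
    rw [← Finset.sum_add_distrib]
    exact Finset.sum_congr rfl fun k _ => by ring
  rw [hcomb, ← hswap] at key
  linarith [hP ▸ key]

private theorem aux_main (m : ℕ) (hm : 0 < m) (x c : Fin m → ℝ)
    (hx : ∀ i, 0 < x i) (hc : ∀ i, 0 < c i)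
    (μ k : Fin m) (hmax : ∀ i, x i ≤ x μ) (hk : x k < x μ)
    (N D : ℝ → ℝ)
    (hNdef : ∀ α, N α = ∑ i, c i * x i ^ α * Real.log (x i))
    (hDdef : ∀ α, D α = ∑ i, c i * x i ^ α)
    (f : ℝ → ℝ)
    (hf : ∀ α, 0 < α → f α = m / α + (∑ i, Real.log (x i)) - m * (N α / D α)) :
    StrictAntiOn f (Set.Ioi (0 : ℝ))
      ∧ Tendsto f (nhdsWithin 0 (Set.Ioi 0)) atTop
      ∧ (∃ L : ℝ, L < 0 ∧ Tendsto f atTop (nhds L))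
      ∧ (∃! α : ℝ, α ∈ Set.Ioi (0 : ℝ) ∧ f α = 0) := by
  have hm' : (0:ℝ) < m := by exact_mod_cast hm
  have hxm : 0 < x μ := hx μ
  have hD : ∀ α : ℝ, 0 < D α := by
    intro α
    rw [hDdef]
    exact Finset.sum_pos (fun i _ => mul_pos (hc i) (Real.rpow_pos_of_pos (hx i) α))
      ⟨μ, Finset.mem_univ μ⟩
  have hφmono : ∀ a b : ℝ, a ≤ b → N a / D a ≤ N b / D b := by
    intro a b hab
    rw [div_le_div_iff₀ (hD a) (hD b), hNdef, hNdef, hDdef, hDdef]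
    exact ratio_mono x c hx (fun i => (hc i).le) hab
  have hφle : ∀ α : ℝ, N α / D α ≤ Real.log (x μ) := by
    intro α
    rw [div_le_iff₀ (hD α), hNdef, hDdef, Finset.mul_sum]
    refine Finset.sum_le_sum fun i _ => ?_
    have := mul_le_mul_of_nonneg_left (Real.log_le_log (hx i) (hmax i))
      (mul_pos (hc i) (Real.rpow_pos_of_pos (hx i) α)).le
    linarith
  have hT : (∑ i, Real.log (x i)) < m * Real.log (x μ) := by
    have h := Finset.sum_lt_sum (fun i (_ : i ∈ Finset.univ) => Real.log_le_log (hx i) (hmax i))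
      ⟨k, Finset.mem_univ k, Real.log_lt_log (hx k) hk⟩
    simpa [Finset.sum_const, Finset.card_univ, nsmul_eq_mul] using h
  -- strict antitone
  have hanti : StrictAntiOn f (Set.Ioi (0 : ℝ)) := by
    intro a ha b hb hab
    rw [hf a ha, hf b hb]
    have h1 : (m:ℝ)/b < (m:ℝ)/a := div_lt_div_of_pos_left hm' ha hab
    have h2 := mul_le_mul_of_nonneg_left (hφmono a b hab.le) hm'.le
    linarith
  -- tendsto at 0+
  have h0 : Tendsto f (nhdsWithin 0 (Set.Ioi 0)) atTop := by
    have hg : Tendsto (fun α : ℝ => (m:ℝ)/α + ((∑ i, Real.log (x i)) - m * Real.log (x μ)))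
        (nhdsWithin 0 (Set.Ioi 0)) atTop := by
      apply tendsto_atTop_add_const_right
      rw [show (HDiv.hDiv (m:ℝ)) = fun α : ℝ => (m:ℝ) * α⁻¹ from funext fun α => div_eq_mul_inv _ _]
      simpa [div_eq_mul_inv] using (tendsto_inv_nhdsGT_zero (𝕜 := ℝ)).const_mul_atTop hm'
    apply tendsto_atTop_mono' _ ?_ hg
    filter_upwards [self_mem_nhdsWithin] with α hα
    rw [hf α hα]
    have := mul_le_mul_of_nonneg_left (hφle α) hm'.le
    linarith
  -- tendsto at ∞ of the ratio
  have hφtendsto : Tendsto (fun α => N α / D α) atTop (𝓝 (Real.log (x μ))) := by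
    set A : ℝ := ∑ i, c i * (if x i = x μ then (1:ℝ) else 0) with hA
    have hA0 : 0 < A := by
      rw [hA]
      refine Finset.sum_pos' (fun i _ => mul_nonneg (hc i).le (by split <;> norm_num))
        ⟨μ, Finset.mem_univ μ, ?_⟩
      simpa using hc μ
    have hterm : ∀ i : Fin m, Tendsto (fun α : ℝ => c i * (x i / x μ) ^ α) atTop
        (𝓝 (c i * (if x i = x μ then (1:ℝ) else 0))) := by
      intro i
      rcases eq_or_lt_of_le (hmax i) with heq | hlt
      · simpa [heq, div_self hxm.ne', Real.one_rpow] using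
          (tendsto_const_nhds : Tendsto (fun _ : ℝ => c i) atTop _)
      · have h1 : Tendsto (fun α : ℝ => (x i / x μ) ^ α) atTop (𝓝 0) :=
          tendsto_rpow_atTop_of_base_lt_one _
            (by have := div_pos (hx i) hxm; linarith) ((div_lt_one hxm).2 hlt)
        simpa [hlt.ne] using (tendsto_const_nhds (α := ℝ)).mul h1
    have hDlim : Tendsto (fun α => D α / x μ ^ α) atTop (𝓝 A) := by
      have heq : ∀ α : ℝ, D α / x μ ^ α = ∑ i, c i * (x i / x μ) ^ α := by
        intro α
        rw [hDdef, Finset.sum_div]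
        exact Finset.sum_congr rfl fun i _ => by
          rw [Real.div_rpow (hx i).le hxm.le]; ring
      rw [funext heq, hA]
      exact tendsto_finset_sum _ fun i _ => hterm i
    have hNlim : Tendsto (fun α => N α / x μ ^ α) atTop (𝓝 (A * Real.log (x μ))) := by
      have heq : ∀ α : ℝ, N α / x μ ^ α = ∑ i, c i * (x i / x μ) ^ α * Real.log (x i) := by
        intro α
        rw [hNdef, Finset.sum_div]
        exact Finset.sum_congr rfl fun i _ => by
          rw [Real.div_rpow (hx i).le hxm.le]; ring
      have hval : A * Real.log (x μ)
          = ∑ i, c i * (if x i = x μ then (1:ℝ) else 0) * Real.log (x i) := by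
        rw [hA, Finset.sum_mul]
        exact Finset.sum_congr rfl fun i _ => by split <;> rename_i h <;> simp [h]
      rw [funext heq, hval]
      exact tendsto_finset_sum _ fun i _ => (hterm i).mul_const _
    have h := hNlim.div hDlim hA0.ne'
    have hval2 : A * Real.log (x μ) / A = Real.log (x μ) := by
      field_simp
    rw [hval2] at h
    apply h.congr
    intro α
    simp only [Pi.div_apply]
    rw [div_div_div_comm, div_self (Real.rpow_pos_of_pos hxm α).ne', div_one]
  have hLlim : Tendsto f atTop (𝓝 ((∑ i, Real.log (x i)) - m * Real.log (x μ))) := by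
    have h1 : Tendsto (fun α : ℝ => (m:ℝ)/α) atTop (𝓝 0) := by
      simpa [div_eq_mul_inv] using tendsto_inv_atTop_zero.const_mul (m:ℝ)
    have h2 := (h1.add (tendsto_const_nhds (x := ∑ i, Real.log (x i)))).sub
      (hφtendsto.const_mul (m:ℝ))
    rw [zero_add] at h2
    apply h2.congr'
    filter_upwards [eventually_gt_atTop (0:ℝ)] with α hα
    rw [hf α hα]
  refine ⟨hanti, h0, ⟨_, sub_neg.2 hT, hLlim⟩, ?_⟩
  -- unique root
  have hcont : ContinuousOn f (Set.Ioi 0) := by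
    have hrpow : ∀ i : Fin m, Continuous fun α : ℝ => x i ^ α := fun i =>
      continuous_iff_continuousAt.2 fun α => Real.continuousAt_const_rpow (hx i).ne'
    have hcD : Continuous D := by
      rw [funext hDdef]
      exact continuous_finset_sum _ fun i _ => continuous_const.mul (hrpow i)
    have hcN : Continuous N := by
      rw [funext hNdef]
      exact continuous_finset_sum _ fun i _ => (continuous_const.mul (hrpow i)).mul continuous_const
    have hg : ContinuousOn (fun α : ℝ =>
        (m:ℝ)/α + (∑ i, Real.log (x i)) - m * (N α / D α)) (Set.Ioi 0) := by
      refine ContinuousOn.sub (ContinuousOn.add ?_ continuousOn_const) ?_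
      · exact continuousOn_const.div continuousOn_id fun α hα => ne_of_gt hα
      · exact continuousOn_const.mul
          (hcN.continuousOn.div hcD.continuousOn fun α _ => (hD α).ne')
    exact hg.congr fun α hα => hf α hα
  obtain ⟨a, hfa, ha⟩ := ((h0.eventually_gt_atTop 0).and self_mem_nhdsWithin).exists
  obtain ⟨b, hab, hfb⟩ := ((eventually_gt_atTop a).and
    (hLlim.eventually (gt_mem_nhds (sub_neg.2 hT)))).exists
  have hsub : Set.Icc a b ⊆ Set.Ioi 0 := fun t ht => lt_of_lt_of_le ha ht.1
  obtain ⟨α₀, hα₀mem, hα₀⟩ := intermediate_value_Icc' hab.le (hcont.mono hsub)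
    ⟨hfb.le, hfa.le⟩
  refine ⟨α₀, ⟨hsub hα₀mem, hα₀⟩, fun β hβ => ?_⟩
  by_contra hne'
  rcases lt_or_gt_of_ne hne' with h | h
  · have := hanti hβ.1 (hsub hα₀mem) h
    rw [hβ.2, hα₀] at this; exact lt_irrefl 0 this
  · have := hanti (hsub hα₀mem) hβ.1 h
    rw [hβ.2, hα₀] at this; exact lt_irrefl 0 this


/-- For the profiled Weibull ML score under APHC Case 2 (with `j` failures before
time `T`, removals `Rᵢ` for `i ≤ j`, and `S = n - m - Σ_{i≤j} Rᵢ` units removed at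
the final failure time `x_m = maxᵢ xᵢ`), the score
`f(α) = m/α + Σ log xᵢ - m (Σ xᵢ^α log xᵢ + Σ_{i≤j} Rᵢ xᵢ^α log xᵢ + S x_m^α log x_m)
/(Σ xᵢ^α + Σ_{i≤j} Rᵢ xᵢ^α + S x_m^α)` is strictly decreasing on `(0,∞)`, tends to
`+∞` as `α → 0⁺`, converges to a strictly negative limit as `α → ∞`, and has exactly
one root in `(0,∞)`. -/
theorem aphc_case2_score_unique_root
    (m j : ℕ) (hm : 2 ≤ m) (hj : j ≤ m)
    (x R : Fin m → ℝ)
    (hx : ∀ i, 0 < x i) (hne : ¬ ∀ i j, x i = x j)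
    (hmax : ∀ i, x i ≤ x ⟨m - 1, Nat.sub_lt (by omega) Nat.one_pos⟩)
    (hR : ∀ i, 0 ≤ R i) (S : ℝ) (hS : 0 ≤ S)
    (f : ℝ → ℝ)
    (hf : ∀ α, 0 < α → f α =
      m / α + (∑ i, Real.log (x i))
        - m * (((∑ i, x i ^ α * Real.log (x i))
                  + (∑ i ∈ Finset.univ.filter (fun i : Fin m => (i : ℕ) < j),
                      R i * x i ^ α * Real.log (x i))
                  + S * x ⟨m - 1, Nat.sub_lt (by omega) Nat.one_pos⟩ ^ α
                      * Real.log (x ⟨m - 1, Nat.sub_lt (by omega) Nat.one_pos⟩))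
            / ((∑ i, x i ^ α)
                  + (∑ i ∈ Finset.univ.filter (fun i : Fin m => (i : ℕ) < j),
                      R i * x i ^ α)
                  + S * x ⟨m - 1, Nat.sub_lt (by omega) Nat.one_pos⟩ ^ α))) :
    StrictAntiOn f (Set.Ioi (0 : ℝ))
      ∧ Tendsto f (nhdsWithin 0 (Set.Ioi 0)) atTop
      ∧ (∃ L : ℝ, L < 0 ∧ Tendsto f atTop (nhds L))
      ∧ (∃! α : ℝ, α ∈ Set.Ioi (0 : ℝ) ∧ f α = 0) := by
  have hm1 : m - 1 < m := Nat.sub_lt (by omega) Nat.one_pos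
  set μ : Fin m := ⟨m - 1, Nat.sub_lt (by omega) Nat.one_pos⟩ with hμdef
  have hmax' : ∀ i, x i ≤ x μ := hmax
  obtain ⟨k, hk⟩ : ∃ k, x k < x μ := by
    by_contra h
    push_neg at h
    apply hne
    intro i i'
    have h1 : x i = x μ := le_antisymm (hmax' i) (h i)
    have h2 : x i' = x μ := le_antisymm (hmax' i') (h i')
    rw [h1, h2]
  set c : Fin m → ℝ :=
    fun i => 1 + (if (i : ℕ) < j then R i else 0) + (if i = μ then S else 0) with hcdef
  have hc : ∀ i, 0 < c i := by
    intro i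
    rw [hcdef]
    dsimp only
    split_ifs <;> linarith [hR i]
  have hden : ∀ α : ℝ, (∑ i, c i * x i ^ α)
      = (∑ i, x i ^ α)
          + (∑ i ∈ Finset.univ.filter (fun i : Fin m => (i : ℕ) < j), R i * x i ^ α)
          + S * x μ ^ α := by
    intro α
    rw [Finset.sum_filter]
    simp only [hcdef, add_mul, one_mul, ite_mul, zero_mul, Finset.sum_add_distrib,
      Finset.sum_ite_eq', Finset.mem_univ, if_true]
  have hnum : ∀ α : ℝ, (∑ i, c i * x i ^ α * Real.log (x i))
      = (∑ i, x i ^ α * Real.log (x i))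
          + (∑ i ∈ Finset.univ.filter (fun i : Fin m => (i : ℕ) < j),
              R i * x i ^ α * Real.log (x i))
          + S * x μ ^ α * Real.log (x μ) := by
    intro α
    rw [Finset.sum_filter]
    simp only [hcdef, add_mul, one_mul, ite_mul, zero_mul, Finset.sum_add_distrib,
      Finset.sum_ite_eq', Finset.mem_univ, if_true]
  have hf' : ∀ α : ℝ, 0 < α → f α =
      m / α + (∑ i, Real.log (x i))
        - m * ((∑ i, c i * x i ^ α * Real.log (x i)) / (∑ i, c i * x i ^ α)) := by
    intro α hα
    rw [hf α hα, hnum α, hden α]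
  exact aux_main m (by omega) x c hx hc μ k hmax' hk _ _ (fun _ => rfl) (fun _ => rfl) f hf'
end
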